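/- arXiv:2310.07168 — 13 statements merged into one kernel-verified Lean document; each statement's English description precedes it below -/
import Mathlib

section
/- Let S be a polyhedron in R^{n+m} such that every extreme point of S, and every extreme point of S intersected with the hyperplane {(x,y) : y_j = y_k}, has integral y-coordinates (for fixed indices 1 ≤ j,k ≤ m). Define Ŝ = {(x,y,δ) ∈ S × R : y_j ≤ δ ≤ y_k} and assume Ŝ is nonempty. Then every extreme point of Ŝ has integral (y,δ)-coordinates. -/
/-- A polyhedron: a finite intersection of closed halfspaces. -/
def IsPolyhedron {E : Type*} [NormedAddCommGroup E] [NormedSpace ℝ E] (S : Set E) : Prop :=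
  ∃ (ι : Type) (_ : Fintype ι) (f : ι → E →L[ℝ] ℝ) (c : ι → ℝ),
    S = {x | ∀ i, f i x ≤ c i}

theorem stmt0 {n m : ℕ} (j k : Fin m)
    (S : Set ((Fin n → ℝ) × (Fin m → ℝ)))
    (hpoly : IsPolyhedron S)
    (hv1 : ∀ p ∈ Set.extremePoints ℝ S, ∀ i : Fin m, ∃ z : ℤ, p.2 i = (z : ℝ))
    (hv2 : ∀ p ∈ Set.extremePoints ℝ (S ∩ {p | p.2 j = p.2 k}),
      ∀ i : Fin m, ∃ z : ℤ, p.2 i = (z : ℝ))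
    (Shat : Set (((Fin n → ℝ) × (Fin m → ℝ)) × ℝ))
    (hShat : Shat = {q | q.1 ∈ S ∧ q.1.2 j ≤ q.2 ∧ q.2 ≤ q.1.2 k})
    (hne : Shat.Nonempty) :
    ∀ q ∈ Set.extremePoints ℝ Shat,
      (∀ i : Fin m, ∃ z : ℤ, q.1.2 i = (z : ℝ)) ∧ ∃ z : ℤ, q.2 = (z : ℝ) := by
  have hconv : Convex ℝ S := by
    obtain ⟨ι, _, f, c, rfl⟩ := hpoly
    intro x hx y hy a b ha hb hab i
    have : f i (a • x + b • y) = a * f i x + b * f i y := by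
      simp [map_add, map_smul]
    rw [this]
    calc a * f i x + b * f i y ≤ a * c i + b * c i := by
          exact add_le_add (mul_le_mul_of_nonneg_left (hx i) ha)
            (mul_le_mul_of_nonneg_left (hy i) hb)
      _ = c i := by rw [← add_mul, hab, one_mul]
  rintro ⟨p, δ⟩ hq
  rw [mem_extremePoints] at hq
  obtain ⟨hqmem, hqext⟩ := hq
  rw [hShat] at hqmem
  obtain ⟨hpS, hjδ, hδk⟩ := hqmem
  -- Step 1: δ = p.2 j ∨ δ = p.2 k
  have step1 : δ = p.2 j ∨ δ = p.2 k := by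
    by_contra h
    push_neg at h
    obtain ⟨h1, h2⟩ := h
    have hj : p.2 j < δ := lt_of_le_of_ne hjδ (fun e => h1 e.symm)
    have hk : δ < p.2 k := lt_of_le_of_ne hδk h2
    set ε := min (δ - p.2 j) (p.2 k - δ) with hε
    have hε0 : 0 < ε := lt_min (by linarith) (by linarith)
    have hε1 : ε ≤ δ - p.2 j := min_le_left _ _
    have hε2 : ε ≤ p.2 k - δ := min_le_right _ _
    have hA : (p, δ - ε) ∈ Shat := by
      rw [hShat]; exact ⟨hpS, by dsimp; linarith, by dsimp; linarith⟩
    have hB : (p, δ + ε) ∈ Shat := by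
      rw [hShat]; exact ⟨hpS, by dsimp; linarith, by dsimp; linarith⟩
    have hseg : (p, δ) ∈ openSegment ℝ (p, δ - ε) (p, δ + ε) := by
      refine ⟨1/2, 1/2, by norm_num, by norm_num, by norm_num, ?_⟩
      ext <;> simp <;> ring
    have := (hqext _ hA _ hB hseg).1
    have : δ - ε = δ := congrArg Prod.snd this
    linarith
  by_cases hjk : p.2 j = p.2 k
  · -- p is an extreme point of S ∩ {y_j = y_k}
    have hδj : δ = p.2 j := by
      have h1 : δ ≤ p.2 k := hδk
      have h2 : p.2 j ≤ δ := hjδ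
      linarith
    have hpext : p ∈ Set.extremePoints ℝ (S ∩ {p | p.2 j = p.2 k}) := by
      rw [mem_extremePoints]
      refine ⟨⟨hpS, hjk⟩, ?_⟩
      rintro a ⟨haS, hajk⟩ b ⟨hbS, hbjk⟩ ⟨t, u, ht, hu, htu, hcomb⟩
      have hA : ((a, a.2 j) : _ × ℝ) ∈ Shat := by
        rw [hShat]; exact ⟨haS, le_refl _, le_of_eq hajk⟩
      have hB : ((b, b.2 j) : _ × ℝ) ∈ Shat := by
        rw [hShat]; exact ⟨hbS, le_refl _, le_of_eq hbjk⟩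
      have hcomb2 : p.2 j = t * a.2 j + u * b.2 j := by
        have := congrArg (fun z => z.2 j) hcomb
        simpa using this.symm
      have hseg : ((p, δ) : _ × ℝ) ∈ openSegment ℝ (a, a.2 j) (b, b.2 j) := by
        refine ⟨t, u, ht, hu, htu, ?_⟩
        have : (t • ((a, a.2 j) : _ × ℝ) + u • (b, b.2 j)).1 = t • a + u • b := rfl
        refine Prod.ext ?_ ?_
        · simpa using hcomb
        · show t * a.2 j + u * b.2 j = δ
          rw [hδj, hcomb2]
      obtain ⟨hA', hB'⟩ := hqext _ hA _ hB hseg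
      exact ⟨congrArg Prod.fst hA', congrArg Prod.fst hB'⟩
    refine ⟨hv2 p hpext, ?_⟩
    obtain ⟨z, hz⟩ := hv2 p hpext j
    exact ⟨z, by rw [hδj, hz]⟩
  · -- p.2 j < p.2 k, δ = p.2 j or p.2 k, p extreme in S
    have hjk' : p.2 j < p.2 k := lt_of_le_of_ne (le_trans hjδ hδk) hjk
    obtain ⟨c0, hc0, hδc⟩ : ∃ c0 : Fin m, (c0 = j ∨ c0 = k) ∧ δ = p.2 c0 := by
      rcases step1 with h | h
      · exact ⟨j, Or.inl rfl, h⟩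
      · exact ⟨k, Or.inr rfl, h⟩
    have hpext : p ∈ Set.extremePoints ℝ S := by
      rw [mem_extremePoints]
      refine ⟨hpS, ?_⟩
      rintro a haS b hbS ⟨t, u, ht, hu, htu, hcomb⟩
      obtain rfl : u = 1 - t := by linarith
      set D := p.2 k - p.2 j with hD
      have hD0 : 0 < D := by simp [hD]; linarith
      set C := |a.2 j - a.2 k| + |b.2 j - b.2 k| with hC
      have hC0 : 0 ≤ C := add_nonneg (abs_nonneg _) (abs_nonneg _)
      set s := min (1/2 : ℝ) (D / (2 * (C + 1))) with hs
      have hs0 : 0 < s := lt_min (by norm_num) (by positivity)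
      have hs1 : s ≤ 1/2 := min_le_left _ _
      have hs2 : s * (C + 1) ≤ D / 2 := by
        have : s ≤ D / (2 * (C + 1)) := min_le_right _ _
        rw [le_div_iff₀ (by positivity)] at this
        nlinarith
      set a' := (1 - s) • p + s • a with ha'
      set b' := (1 - s) • p + s • b with hb'
      have ha'S : a' ∈ S := hconv hpS haS (by linarith) hs0.le (by ring)
      have hb'S : b' ∈ S := hconv hpS hbS (by linarith) hs0.le (by ring)
      have hkey : ∀ (x : (Fin n → ℝ) × (Fin m → ℝ)), x ∈ S →
          |x.2 j - x.2 k| ≤ C → ((1 - s) • p + s • x).2 j ≤ ((1 - s) • p + s • x).2 k := by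
        intro x hxS hxC
        have e1 : ((1 - s) • p + s • x).2 j = (1 - s) * p.2 j + s * x.2 j := rfl
        have e2 : ((1 - s) • p + s • x).2 k = (1 - s) * p.2 k + s * x.2 k := rfl
        rw [e1, e2]
        have h1 : x.2 j - x.2 k ≤ C := le_trans (le_abs_self _) hxC
        have h2 : s * (x.2 j - x.2 k) ≤ s * (C + 1) :=
          mul_le_mul_of_nonneg_left (by linarith) hs0.le
        have h3 : D / 2 ≤ (1 - s) * D := by nlinarith
        nlinarith
      have ha'jk : a'.2 j ≤ a'.2 k :=
        hkey a haS (by rw [hC]; have := abs_nonneg (b.2 j - b.2 k); linarith)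
      have hb'jk : b'.2 j ≤ b'.2 k :=
        hkey b hbS (by rw [hC]; have := abs_nonneg (a.2 j - a.2 k); linarith)
      have hA : ((a', a'.2 c0) : _ × ℝ) ∈ Shat := by
        rw [hShat]
        rcases hc0 with rfl | rfl
        · exact ⟨ha'S, le_refl _, ha'jk⟩
        · exact ⟨ha'S, ha'jk, le_refl _⟩
      have hB : ((b', b'.2 c0) : _ × ℝ) ∈ Shat := by
        rw [hShat]
        rcases hc0 with rfl | rfl
        · exact ⟨hb'S, le_refl _, hb'jk⟩
        · exact ⟨hb'S, hb'jk, le_refl _⟩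
      have hp' : t • a' + (1 - t) • b' = p := by
        rw [ha', hb']
        have : t • ((1 - s) • p + s • a) + (1 - t) • ((1 - s) • p + s • b)
            = (1 - s) • p + s • (t • a + (1 - t) • b) := by
          match_scalars <;> ring
        rw [this, hcomb]
        match_scalars <;> ring
      have hseg : ((p, δ) : _ × ℝ) ∈ openSegment ℝ (a', a'.2 c0) (b', b'.2 c0) := by
        refine ⟨t, 1 - t, ht, hu, by ring, ?_⟩
        refine Prod.ext ?_ ?_
        · simpa using hp'
        · show t * a'.2 c0 + (1 - t) * b'.2 c0 = δ
          have := congrArg (fun z => z.2 c0) hp'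
          rw [hδc]
          exact this
      obtain ⟨hA', hB'⟩ := hqext _ hA _ hB hseg
      have ha'p : a' = p := congrArg Prod.fst hA'
      have hb'p : b' = p := congrArg Prod.fst hB'
      constructor
      · have : s • a = s • p := by
          have : (1 - s) • p + s • a = p := ha'p
          linear_combination (norm := module) this
        exact smul_right_injective _ hs0.ne' this
      · have : s • b = s • p := by
          have : (1 - s) • p + s • b = p := hb'p
          linear_combination (norm := module) this
        exact smul_right_injective _ hs0.ne' this
    refine ⟨hv1 p hpext, ?_⟩
    obtain ⟨z, hz⟩ := hv1 p hpext c0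
    exact ⟨z, by rw [hδc, hz]⟩
end

section
/- Let Λ = Π_{i=1}^d Λ_i where Λ_i = {λ_i ∈ R^{n+1} : λ_i ≥ 0, Σ_{j=0}^n λ_{ij} = 1} is the standard simplex. Let E = {0,…,n}^d and define the multilinear set M = {(λ, w) : λ ∈ Λ, w_j = Π_{i=1}^d λ_{i j_i} for all j ∈ E}. Then the convex hull of M equals R = {(λ, w) : w ≥ 0, Σ_{j∈E} w_j = 1, and λ_{i j_i} = Σ_{p∈E : p_i = j_i} w_p for all i ∈ [d] and j ∈ E}. -/
open Finset

lemma marg_aux {d n : ℕ} (l : Fin d → Fin (n+1) → ℝ) (hl : ∀ i, ∑ j, l i j = 1)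
    (i : Fin d) (c : Fin (n+1)) :
    ∑ q ∈ Finset.univ.filter (fun q : Fin d → Fin (n+1) => q i = c), ∏ k, l k (q k)
      = l i c := by
  classical
  have h1 : Finset.univ.filter (fun q : Fin d → Fin (n+1) => q i = c)
      = Fintype.piFinset (fun k => if k = i then {c} else Finset.univ) := by
    ext q
    simp only [Finset.mem_filter, Finset.mem_univ, true_and, Fintype.mem_piFinset]
    constructor
    · intro h k; by_cases hk : k = i <;> simp [hk, h]
    · intro h; have := h i; simpa using this
  rw [h1, ← Finset.prod_univ_sum]
  have h2 : ∀ k, (∑ j ∈ (if k = i then ({c} : Finset (Fin (n+1))) else Finset.univ), l k j)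
      = if k = i then l i c else 1 := by
    intro k; by_cases hk : k = i <;> simp [hk, hl k]
  simp_rw [h2]
  simp

theorem stmt4 {d n : ℕ} (hd : 0 < d) (hn : 0 < n)
    (Λ : Set (Fin d → Fin (n+1) → ℝ))
    (hΛ : Λ = {l | ∀ i, (∀ j, 0 ≤ l i j) ∧ ∑ j, l i j = 1})
    (M R : Set ((Fin d → Fin (n+1) → ℝ) × ((Fin d → Fin (n+1)) → ℝ)))
    (hM : M = {p | p.1 ∈ Λ ∧ ∀ j : Fin d → Fin (n+1), p.2 j = ∏ i, p.1 i (j i)})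
    (hR : R = {p | (∀ j, 0 ≤ p.2 j) ∧ (∑ j, p.2 j = 1) ∧
      ∀ (i : Fin d) (j : Fin d → Fin (n+1)),
        p.1 i (j i) =
          ∑ q ∈ Finset.univ.filter (fun q : Fin d → Fin (n+1) => q i = j i), p.2 q}) :
    convexHull ℝ M = R := by
  classical
  subst hΛ hM hR
  apply Set.Subset.antisymm
  · apply convexHull_min
    · -- M ⊆ R
      rintro ⟨l, w⟩ ⟨hl, hw⟩
      simp only [Set.mem_setOf_eq] at hl hw ⊢
      refine ⟨fun j => by rw [hw]; exact Finset.prod_nonneg fun i _ => (hl i).1 (j i), ?_, ?_⟩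
      · simp_rw [hw]
        rw [← Fintype.piFinset_univ, ← Finset.prod_univ_sum]
        simp [(hl _).2]
      · intro i j
        simp_rw [hw]
        rw [marg_aux l (fun i => (hl i).2) i (j i)]
    · -- R convex
      intro x hx y hy a b ha hb hab
      simp only [Set.mem_setOf_eq] at hx hy ⊢
      obtain ⟨hx0, hx1, hxm⟩ := hx; obtain ⟨hy0, hy1, hym⟩ := hy
      refine ⟨?_, ?_, ?_⟩
      · intro j
        simp only [Prod.snd_add, Prod.smul_snd, Pi.add_apply, Pi.smul_apply, smul_eq_mul]
        exact add_nonneg (mul_nonneg ha (hx0 j)) (mul_nonneg hb (hy0 j))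
      · simp only [Prod.snd_add, Prod.smul_snd, Pi.add_apply, Pi.smul_apply, smul_eq_mul]
        rw [Finset.sum_add_distrib, ← Finset.mul_sum, ← Finset.mul_sum, hx1, hy1]
        linarith
      · intro i j
        simp only [Prod.fst_add, Prod.snd_add, Prod.smul_fst, Prod.smul_snd, Pi.add_apply,
          Pi.smul_apply, smul_eq_mul]
        rw [Finset.sum_add_distrib, ← Finset.mul_sum, ← Finset.mul_sum,
          ← hxm i j, ← hym i j]
  · -- R ⊆ convexHull M
    rintro ⟨l, w⟩ ⟨hw0, hw1, hm⟩
    set z : (Fin d → Fin (n+1)) → ((Fin d → Fin (n+1) → ℝ) × ((Fin d → Fin (n+1)) → ℝ)) :=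
      fun q => ((fun i j => if q i = j then (1:ℝ) else 0),
        fun j => if j = q then (1:ℝ) else 0) with hz
    have hzM : ∀ q, z q ∈ {p : (Fin d → Fin (n+1) → ℝ) × ((Fin d → Fin (n+1)) → ℝ) |
        (∀ i, (∀ j, 0 ≤ p.1 i j) ∧ ∑ j, p.1 i j = 1) ∧
        ∀ j : Fin d → Fin (n+1), p.2 j = ∏ i, p.1 i (j i)} := by
      intro q
      constructor
      · intro i
        refine ⟨fun j => by positivity, ?_⟩
        simp [hz]
      · intro j
        simp only [hz]
        rw [Finset.prod_boole]
        congr 1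
        simp [funext_iff, eq_comm]
    have hmem := Finset.centerMass_mem_convexHull (Finset.univ)
      (fun q _ => hw0 q) (by rw [hw1]; norm_num) (fun q _ => hzM q)
    have heq : Finset.univ.centerMass w z = (l, w) := by
      rw [Finset.centerMass, hw1, inv_one, one_smul]
      apply Prod.ext
      · rw [Prod.fst_sum]
        funext i j
        rw [Finset.sum_apply, hm i (fun _ => j)]
        simp only [Finset.sum_apply, Prod.smul_fst, Pi.smul_apply, smul_eq_mul, hz]
        rw [Finset.sum_filter]
        congr 1
        funext q
        by_cases h : q i = j <;> simp [h]
      · rw [Prod.snd_sum]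
        funext j
        simp only [Finset.sum_apply, Prod.smul_snd, Pi.smul_apply, smul_eq_mul, hz]
        simp [Finset.sum_ite_eq]
    rw [← heq]
    exact hmem
end

section
/- Let Λ_i be the standard simplex in R^{n+1} and M^{V} = {(λ, w) : λ ∈ Π_i Λ_i, λ_i ∈ vert(Λ_i) for each i, w_j = Π_i λ_{i j_i} for j ∈ {0,…,n}^d}. Then conv(M^V) equals conv(M^Λ) where M^Λ is defined without the vertex restriction; i.e., the convex hull of the multilinear set over the product of simplices is determined by the vertices of the product of simplices. -/
open Finset

theorem stmt5 {d n : ℕ} (hd : 0 < d) (hn : 0 < n)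
    (Λ : Set (Fin d → Fin (n+1) → ℝ))
    (hΛ : Λ = {l | ∀ i, (∀ j, 0 ≤ l i j) ∧ ∑ j, l i j = 1})
    (MΛ MV : Set ((Fin d → Fin (n+1) → ℝ) × ((Fin d → Fin (n+1)) → ℝ)))
    (hMΛ : MΛ = {p | p.1 ∈ Λ ∧ ∀ j : Fin d → Fin (n+1), p.2 j = ∏ i, p.1 i (j i)})
    (hMV : MV = {p | p ∈ MΛ ∧
      ∀ i, ∃ j₀ : Fin (n+1), p.1 i = fun k => if k = j₀ then (1 : ℝ) else 0}) :
    convexHull ℝ MV = convexHull ℝ MΛ := by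
  subst hΛ hMΛ hMV
  refine le_antisymm (convexHull_mono fun p hp => hp.1) ?_
  refine convexHull_min (fun p hp => ?_) (convex_convexHull ℝ _)
  obtain ⟨hl, hw⟩ := hp
  set z : (Fin d → Fin (n+1)) → ((Fin d → Fin (n+1) → ℝ) × ((Fin d → Fin (n+1)) → ℝ)) :=
    fun j => (fun i k => if k = j i then (1:ℝ) else 0, fun k => if k = j then (1:ℝ) else 0) with hz
  set W : (Fin d → Fin (n+1)) → ℝ := fun j => ∏ i, p.1 i (j i) with hWdef
  have hW0 : ∀ j, 0 ≤ W j := fun j => Finset.prod_nonneg fun i _ => (hl i).1 (j i)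
  have hW1 : ∑ j, W j = 1 := by
    have h1 : ∏ i : Fin d, ∑ k : Fin (n+1), p.1 i k = ∑ x ∈ Fintype.piFinset (fun _ : Fin d => (univ : Finset (Fin (n+1)))), ∏ i, p.1 i (x i) :=
      Finset.prod_univ_sum _ _
    rw [Fintype.piFinset_univ] at h1
    rw [hWdef, ← h1]
    exact Finset.prod_eq_one fun i _ => (hl i).2
  have hzmem : ∀ j, z j ∈ {p : ((Fin d → Fin (n+1) → ℝ) × ((Fin d → Fin (n+1)) → ℝ)) |
      p ∈ {p | (p.1 ∈ {l | ∀ i, (∀ j, 0 ≤ l i j) ∧ ∑ j, l i j = 1}) ∧ ∀ j : Fin d → Fin (n+1), p.2 j = ∏ i, p.1 i (j i)} ∧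
      ∀ i, ∃ j₀ : Fin (n+1), p.1 i = fun k => if k = j₀ then (1 : ℝ) else 0} := by
    intro j
    refine ⟨⟨fun i => ⟨fun k => by dsimp [z]; split <;> norm_num, by simp [z]⟩, ?_⟩, fun i => ⟨j i, rfl⟩⟩
    intro k
    by_cases h : k = j
    · subst h; simp [z]
    · obtain ⟨i, hi⟩ : ∃ i, k i ≠ j i := by
        by_contra hc
        push_neg at hc
        exact h (funext hc)
      simp only [z, if_neg h]
      exact (Finset.prod_eq_zero (Finset.mem_univ i) (by simp [hi])).symm
  have heq : ∑ j, W j • z j = p := by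
    have h1 : (∑ j, W j • z j).1 = p.1 := by
      rw [Prod.fst_sum]
      funext i k
      simp only [Prod.smul_fst, Finset.sum_apply, Pi.smul_apply, smul_eq_mul]
      set g : Fin d → Fin (n+1) → ℝ := fun i' k' =>
        if i' = i then (if k' = k then p.1 i k else 0) else p.1 i' k' with hg
      have stepA : ∑ j : Fin d → Fin (n+1), W j * (if k = j i then (1:ℝ) else 0)
          = ∑ j : Fin d → Fin (n+1), ∏ i', g i' (j i') := by
        refine Finset.sum_congr rfl fun j _ => ?_
        by_cases h : k = j i
        · rw [if_pos h, mul_one]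
          refine Finset.prod_congr rfl fun i' _ => ?_
          by_cases h2 : i' = i
          · subst h2; simp [g, ← h]
          · simp [g, h2]
        · rw [if_neg h, mul_zero]
          refine (Finset.prod_eq_zero (Finset.mem_univ i) ?_).symm
          simp only [g, if_pos rfl]
          rw [if_neg (fun hc => h hc.symm)]
      have stepB : ∑ j : Fin d → Fin (n+1), ∏ i', g i' (j i') = ∏ i', ∑ k', g i' k' := by
        rw [Finset.prod_univ_sum, Fintype.piFinset_univ]
      have stepC : ∏ i', ∑ k', g i' k' = p.1 i k := by
        rw [Finset.prod_eq_single i]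
        · simp [g]
        · intro i' _ hi'
          simp only [g, if_neg hi']
          exact (hl i').2
        · simp
      simp only [z] at stepA ⊢
      rw [stepA, stepB, stepC]
    have h2 : (∑ j, W j • z j).2 = p.2 := by
      rw [Prod.snd_sum]
      funext k
      simp only [Prod.smul_snd, Finset.sum_apply, Pi.smul_apply, smul_eq_mul, z]
      rw [Finset.sum_congr rfl (fun j _ => by rw [mul_ite, mul_one, mul_zero])]
      rw [Finset.sum_ite_eq Finset.univ k W]
      simp [hw k, W]
    exact Prod.ext h1 h2
  rw [← heq]
  exact (convex_convexHull ℝ _).sum_mem (fun j _ => hW0 j) hW1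
    (fun j _ => subset_convexHull ℝ _ (hzmem j))
end

section
/- For i = 1, 2, let D_i be a subset of R^{n_i} × R^m with points written (x_i, y), and let D = {(x_1, x_2, y) : (x_1, y) ∈ D_1 and (x_2, y) ∈ D_2}. If proj_y(D_1) = proj_y(D_2) is a finite set of affinely independent points, then conv(D) = {(x_1, x_2, y) : (x_1, y) ∈ conv(D_1) and (x_2, y) ∈ conv(D_2)}. -/
open Finset

/-- Fiberwise decomposition of a point of the convex hull of a set whose
`y`-projection is the finite set `Y`. -/
lemma key_fiber {n m : ℕ} (D : Set ((Fin n → ℝ) × (Fin m → ℝ))) (Y : Finset (Fin m → ℝ))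
    (hY : Prod.snd '' D = (Y : Set (Fin m → ℝ)))
    {p : (Fin n → ℝ) × (Fin m → ℝ)} (hp : p ∈ convexHull ℝ D) :
    ∃ w : (Fin m → ℝ) → ℝ, (∀ y, 0 ≤ w y) ∧ (∑ y ∈ Y, w y) = 1 ∧
      (∑ y ∈ Y, w y • y) = p.2 ∧
      ∃ α : (Fin m → ℝ) → (Fin n → ℝ),
        (∀ y ∈ Y, w y ≠ 0 → (α y, y) ∈ convexHull ℝ (D ∩ {q | q.2 = y})) ∧
        (∑ y ∈ Y, w y • α y) = p.1 := by
  classical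
  rw [_root_.convexHull_eq] at hp
  obtain ⟨ι, t, w, z, hw0, hw1, hz, hcm⟩ := hp
  have hmap : ∀ i ∈ t, (z i).2 ∈ Y := fun i hi => by
    have : (z i).2 ∈ Prod.snd '' D := ⟨z i, hz i hi, rfl⟩
    rwa [hY] at this
  set W : (Fin m → ℝ) → ℝ := fun y => ∑ i ∈ t.filter (fun i => (z i).2 = y), w i with hWdef
  have hW0 : ∀ y, 0 ≤ W y := fun y =>
    Finset.sum_nonneg fun i hi => hw0 i (Finset.mem_filter.1 hi).1
  have hWsum : ∑ y ∈ Y, W y = 1 := by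
    rw [hWdef]; rw [Finset.sum_fiberwise_of_maps_to hmap]; exact hw1
  have hzero : ∀ y, W y = 0 → ∀ i ∈ t.filter (fun i => (z i).2 = y), w i = 0 := fun y hy =>
    (Finset.sum_eq_zero_iff_of_nonneg
      (fun j hj => hw0 j (Finset.mem_filter.1 hj).1)).1 hy
  set α : (Fin m → ℝ) → (Fin n → ℝ) := fun y =>
    if W y = 0 then 0 else (W y)⁻¹ • ∑ i ∈ t.filter (fun i => (z i).2 = y), w i • (z i).1
    with hαdef
  have hpsum : p = ∑ i ∈ t, w i • z i := by
    rw [← hcm, Finset.centerMass_eq_of_sum_1 _ _ hw1]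
  have hfiber1 : ∀ y, (∑ i ∈ t.filter (fun i => (z i).2 = y), w i • (z i).1) = W y • α y := by
    intro y
    by_cases h : W y = 0
    · rw [hαdef]
      simp only [h, if_pos, zero_smul]
      exact Finset.sum_eq_zero fun i hi => by rw [hzero y h i hi, zero_smul]
    · rw [hαdef]
      simp only [h, if_neg, not_false_iff]
      rw [smul_smul, mul_inv_cancel₀ h, one_smul]
  -- main sums
  refine ⟨W, hW0, hWsum, ?_, α, ?_, ?_⟩
  · -- second coordinate
    have : (∑ y ∈ Y, W y • y) = ∑ i ∈ t, w i • (z i).2 := by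
      rw [← Finset.sum_fiberwise_of_maps_to hmap (fun i => w i • (z i).2)]
      refine Finset.sum_congr rfl fun y _ => ?_
      rw [hWdef, Finset.sum_smul]
      exact Finset.sum_congr rfl fun i hi => by
        rw [(Finset.mem_filter.1 hi).2]
    rw [this, hpsum, Prod.snd_sum]
    exact Finset.sum_congr rfl fun i _ => rfl
  · -- fiber membership
    intro y hy hWy
    have hSnonneg : ∀ i ∈ t.filter (fun i => (z i).2 = y), 0 ≤ w i :=
      fun i hi => hw0 i (Finset.mem_filter.1 hi).1
    have hSpos : 0 < ∑ i ∈ t.filter (fun i => (z i).2 = y), w i :=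
      lt_of_le_of_ne (hW0 y) (Ne.symm hWy)
    have hmem : ∀ i ∈ t.filter (fun i => (z i).2 = y), z i ∈ D ∩ {q | q.2 = y} := by
      intro i hi
      rcases Finset.mem_filter.1 hi with ⟨hit, hzi⟩
      exact ⟨hz i hit, hzi⟩
    have := Finset.centerMass_mem_convexHull (t.filter (fun i => (z i).2 = y))
      hSnonneg hSpos hmem
    have hcmval : (t.filter (fun i => (z i).2 = y)).centerMass w z = (α y, y) := by
      rw [Finset.centerMass]
      apply Prod.ext
      · simp only [Prod.smul_fst, Prod.fst_sum, Prod.smul_snd]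
        rw [hαdef]
        simp only [hWy, if_neg, not_false_iff]
        rfl
      · simp only [Prod.smul_snd, Prod.snd_sum]
        have : ∑ i ∈ t.filter (fun i => (z i).2 = y), w i • (z i).2
            = (∑ i ∈ t.filter (fun i => (z i).2 = y), w i) • y := by
          rw [Finset.sum_smul]
          exact Finset.sum_congr rfl fun i hi => by rw [(Finset.mem_filter.1 hi).2]
        rw [this, smul_smul, inv_mul_cancel₀ (by exact hWy), one_smul]
    rwa [hcmval] at this
  · -- first coordinate
    have : (∑ y ∈ Y, W y • α y) = ∑ i ∈ t, w i • (z i).1 := by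
      rw [← Finset.sum_fiberwise_of_maps_to hmap (fun i => w i • (z i).1)]
      exact Finset.sum_congr rfl fun y _ => (hfiber1 y).symm
    rw [this, hpsum, Prod.fst_sum]
    exact Finset.sum_congr rfl fun i _ => rfl

/-- Uniqueness of affine weights. -/
lemma key_unique {m : ℕ} (Y : Finset (Fin m → ℝ))
    (haff : AffineIndependent ℝ ((↑) : {y // y ∈ Y} → (Fin m → ℝ)))
    (w₁ w₂ : (Fin m → ℝ) → ℝ) (h₁ : ∑ y ∈ Y, w₁ y = 1) (h₂ : ∑ y ∈ Y, w₂ y = 1)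
    (h : (∑ y ∈ Y, w₁ y • y) = ∑ y ∈ Y, w₂ y • y) :
    ∀ y ∈ Y, w₁ y = w₂ y := by
  classical
  have hs₁ : ∑ i : {y // y ∈ Y}, w₁ (i : Fin m → ℝ) = 1 := by
    rw [Finset.sum_coe_sort Y w₁]; exact h₁
  have hs₂ : ∑ i : {y // y ∈ Y}, w₂ (i : Fin m → ℝ) = 1 := by
    rw [Finset.sum_coe_sort Y w₂]; exact h₂
  have hc : (Finset.univ.affineCombination ℝ ((↑) : {y // y ∈ Y} → (Fin m → ℝ))
        (fun i => w₁ (i : Fin m → ℝ)))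
      = Finset.univ.affineCombination ℝ ((↑) : {y // y ∈ Y} → (Fin m → ℝ))
        (fun i => w₂ (i : Fin m → ℝ)) := by
    rw [Finset.affineCombination_eq_linear_combination _ _ _ hs₁,
        Finset.affineCombination_eq_linear_combination _ _ _ hs₂]
    rw [show (∑ i : {y // y ∈ Y}, w₁ (i : Fin m → ℝ) • (i : Fin m → ℝ))
        = ∑ y ∈ Y, w₁ y • y from Finset.sum_coe_sort Y (fun y => w₁ y • y),
      show (∑ i : {y // y ∈ Y}, w₂ (i : Fin m → ℝ) • (i : Fin m → ℝ))
        = ∑ y ∈ Y, w₂ y • y from Finset.sum_coe_sort Y (fun y => w₂ y • y)]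
    exact h
  have := haff.indicator_eq_of_affineCombination_eq Finset.univ Finset.univ _ _ hs₁ hs₂ hc
  intro y hy
  have hmem : (⟨y, hy⟩ : {y // y ∈ Y}) ∈ (Finset.univ : Finset {y // y ∈ Y}) := Finset.mem_univ _
  have := congrFun this ⟨y, hy⟩
  simpa [Set.indicator_of_mem, hmem] using this

theorem stmt8 {n₁ n₂ m : ℕ}
    (D₁ : Set ((Fin n₁ → ℝ) × (Fin m → ℝ)))
    (D₂ : Set ((Fin n₂ → ℝ) × (Fin m → ℝ)))
    (D : Set ((Fin n₁ → ℝ) × (Fin n₂ → ℝ) × (Fin m → ℝ)))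
    (hD : D = {p | (p.1, p.2.2) ∈ D₁ ∧ (p.2.1, p.2.2) ∈ D₂})
    (Y : Finset (Fin m → ℝ))
    (hY1 : Prod.snd '' D₁ = (Y : Set (Fin m → ℝ)))
    (hY2 : Prod.snd '' D₂ = (Y : Set (Fin m → ℝ)))
    (haff : AffineIndependent ℝ ((↑) : {y // y ∈ Y} → (Fin m → ℝ))) :
    convexHull ℝ D =
      {p | (p.1, p.2.2) ∈ convexHull ℝ D₁ ∧ (p.2.1, p.2.2) ∈ convexHull ℝ D₂} := by
  classical
  apply Set.Subset.antisymm
  · apply convexHull_min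
    · intro p hp
      rw [hD] at hp
      exact ⟨subset_convexHull ℝ D₁ hp.1, subset_convexHull ℝ D₂ hp.2⟩
    · set f₁ : ((Fin n₁ → ℝ) × (Fin n₂ → ℝ) × (Fin m → ℝ)) →ₗ[ℝ] ((Fin n₁ → ℝ) × (Fin m → ℝ)) :=
        (LinearMap.fst ℝ (Fin n₁ → ℝ) ((Fin n₂ → ℝ) × (Fin m → ℝ))).prod
          ((LinearMap.snd ℝ (Fin n₂ → ℝ) (Fin m → ℝ)).comp
            (LinearMap.snd ℝ (Fin n₁ → ℝ) ((Fin n₂ → ℝ) × (Fin m → ℝ))))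
      set f₂ : ((Fin n₁ → ℝ) × (Fin n₂ → ℝ) × (Fin m → ℝ)) →ₗ[ℝ] ((Fin n₂ → ℝ) × (Fin m → ℝ)) :=
        ((LinearMap.fst ℝ (Fin n₂ → ℝ) (Fin m → ℝ)).comp
            (LinearMap.snd ℝ (Fin n₁ → ℝ) ((Fin n₂ → ℝ) × (Fin m → ℝ)))).prod
          ((LinearMap.snd ℝ (Fin n₂ → ℝ) (Fin m → ℝ)).comp
            (LinearMap.snd ℝ (Fin n₁ → ℝ) ((Fin n₂ → ℝ) × (Fin m → ℝ))))
      have : {p : (Fin n₁ → ℝ) × (Fin n₂ → ℝ) × (Fin m → ℝ) |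
            (p.1, p.2.2) ∈ convexHull ℝ D₁ ∧ (p.2.1, p.2.2) ∈ convexHull ℝ D₂}
          = f₁ ⁻¹' (convexHull ℝ D₁) ∩ f₂ ⁻¹' (convexHull ℝ D₂) := rfl
      rw [this]
      exact ((convex_convexHull ℝ D₁).linear_preimage f₁).inter
        ((convex_convexHull ℝ D₂).linear_preimage f₂)
  · rintro ⟨x₁, x₂, y⟩ ⟨h1, h2⟩
    obtain ⟨w₁, hw₁0, hw₁1, hw₁y, α, hα, hαsum⟩ := key_fiber D₁ Y hY1 h1
    obtain ⟨w₂, hw₂0, hw₂1, hw₂y, β, hβ, hβsum⟩ := key_fiber D₂ Y hY2 h2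
    have hweq : ∀ y' ∈ Y, w₁ y' = w₂ y' :=
      key_unique Y haff w₁ w₂ hw₁1 hw₂1 (by rw [hw₁y, hw₂y])
    set g : (Fin m → ℝ) → ((Fin n₁ → ℝ) × (Fin n₂ → ℝ) × (Fin m → ℝ)) :=
      fun y' => (α y', β y', y') with hgdef
    have hg : ∀ y' ∈ Y, w₁ y' ≠ 0 → g y' ∈ convexHull ℝ D := by
      intro y' hy' hne
      have hne₂ : w₂ y' ≠ 0 := by rw [← hweq y' hy']; exact hne
      have hα' := hα y' hy' hne
      have hβ' := hβ y' hy' hne₂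
      set A : Set (Fin n₁ → ℝ) := {a | (a, y') ∈ D₁} with hA
      set B : Set (Fin n₂ → ℝ) := {b | (b, y') ∈ D₂} with hB
      have hD₁eq : D₁ ∩ {q | q.2 = y'} = A ×ˢ ({y'} : Set (Fin m → ℝ)) := by
        ext ⟨a, b⟩
        constructor
        · rintro ⟨hab, hb⟩
          simp only [Set.mem_setOf_eq] at hb
          subst hb
          exact ⟨hab, rfl⟩
        · rintro ⟨ha, hb⟩
          simp only [Set.mem_singleton_iff] at hb
          subst hb
          exact ⟨ha, rfl⟩
      have hD₂eq : D₂ ∩ {q | q.2 = y'} = B ×ˢ ({y'} : Set (Fin m → ℝ)) := by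
        ext ⟨a, b⟩
        constructor
        · rintro ⟨hab, hb⟩
          simp only [Set.mem_setOf_eq] at hb
          subst hb
          exact ⟨hab, rfl⟩
        · rintro ⟨ha, hb⟩
          simp only [Set.mem_singleton_iff] at hb
          subst hb
          exact ⟨ha, rfl⟩
      rw [hD₁eq, convexHull_prod, convexHull_singleton] at hα'
      rw [hD₂eq, convexHull_prod, convexHull_singleton] at hβ'
      have hαA : α y' ∈ convexHull ℝ A := hα'.1
      have hβB : β y' ∈ convexHull ℝ B := hβ'.1
      have hsub : A ×ˢ (B ×ˢ ({y'} : Set (Fin m → ℝ))) ⊆ D := by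
        rintro ⟨a, b, c⟩ ⟨ha, hb, hc⟩
        simp only [Set.mem_singleton_iff] at hc
        subst hc
        rw [hD]
        exact ⟨ha, hb⟩
      have : g y' ∈ convexHull ℝ (A ×ˢ (B ×ˢ ({y'} : Set (Fin m → ℝ)))) := by
        rw [convexHull_prod, convexHull_prod, convexHull_singleton]
        exact ⟨hαA, hβB, rfl⟩
      exact convexHull_mono hsub this
    set T : Finset (Fin m → ℝ) := Y.filter (fun y' => w₁ y' ≠ 0) with hTdef
    have hTsum : ∑ y' ∈ T, w₁ y' = 1 := by
      rw [hTdef, Finset.sum_filter_ne_zero]; exact hw₁1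
    have hmem : T.centerMass w₁ g ∈ convexHull ℝ D := by
      apply (convex_convexHull ℝ D).centerMass_mem
      · intro i hi; exact hw₁0 i
      · rw [hTsum]; exact one_pos
      · intro i hi
        rcases Finset.mem_filter.1 hi with ⟨hiY, hine⟩
        exact hg i hiY hine
    have hval : T.centerMass w₁ g = (x₁, x₂, y) := by
      rw [Finset.centerMass_eq_of_sum_1 _ _ hTsum]
      have hsumT : ∀ (E : Type) [inst : AddCommMonoid E] [Module ℝ E] (f : (Fin m → ℝ) → E),
          (∑ y' ∈ T, w₁ y' • f y') = ∑ y' ∈ Y, w₁ y' • f y' := by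
        intro E _ _ f
        rw [hTdef]
        apply Finset.sum_filter_of_ne
        intro x hx hne
        intro h0
        apply hne
        rw [h0, zero_smul]
      apply Prod.ext
      · rw [show (∑ y' ∈ T, w₁ y' • g y').1 = ∑ y' ∈ T, w₁ y' • (g y').1 by
          rw [Prod.fst_sum]; exact Finset.sum_congr rfl fun i _ => rfl]
        rw [hsumT _ (fun y' => α y')]
        exact hαsum
      · apply Prod.ext
        · rw [show (∑ y' ∈ T, w₁ y' • g y').2.1 = ∑ y' ∈ T, w₁ y' • (g y').2.1 by
            rw [Prod.snd_sum, Prod.fst_sum]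
            exact Finset.sum_congr rfl fun i _ => rfl]
          rw [hsumT _ (fun y' => β y')]
          rw [show (∑ y' ∈ Y, w₁ y' • β y') = ∑ y' ∈ Y, w₂ y' • β y' from
            Finset.sum_congr rfl fun y' hy' => by rw [hweq y' hy']]
          exact hβsum
        · rw [show (∑ y' ∈ T, w₁ y' • g y').2.2 = ∑ y' ∈ T, w₁ y' • (g y').2.2 by
            rw [Prod.snd_sum, Prod.snd_sum]
            exact Finset.sum_congr rfl fun i _ => rfl]
          rw [hsumT _ (fun y' => y')]
          exact hw₁y
    rw [← hval]
    exact hmem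
end

section
/- Let P = {u ∈ R^{n+1} : u_0 = a_0, a_0 ≤ u_n ≤ a_n, and a_0 ≤ u_j ≤ min{a_j, u_n} for 1 ≤ j ≤ n−1} where a_0 < a_1 < ⋯ < a_n, and let Q be the simplex with vertices v_j = (min{a_0,a_j},…,min{a_n,a_j}), j = 0,…,n. Then Q ⊆ P, and for u ∈ P the point s with s_j = conc(ξ)(a_j; u), where conc(ξ) is the concave envelope over [a_0,a_n] of the discrete function ξ(a_j) = u_j, satisfies u ≤ s, s_n = u_n, and s ∈ Q. -/
private lemma comb_le_aux {α β p q r : ℝ} (hα : 0 ≤ α) (hβ : 0 ≤ β) (hαβ : α + β = 1)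
    (hp : p ≤ r) (hq : q ≤ r) : α * p + β * q ≤ r := by
  calc α * p + β * q ≤ α * r + β * r :=
        add_le_add (mul_le_mul_of_nonneg_left hp hα) (mul_le_mul_of_nonneg_left hq hβ)
    _ = r := by rw [← add_mul, hαβ, one_mul]

private lemma comb_ge_aux {α β p q r : ℝ} (hα : 0 ≤ α) (hβ : 0 ≤ β) (hαβ : α + β = 1)
    (hp : r ≤ p) (hq : r ≤ q) : r ≤ α * p + β * q := by
  calc r = α * r + β * r := by rw [← add_mul, hαβ, one_mul]
    _ ≤ α * p + β * q :=
        add_le_add (mul_le_mul_of_nonneg_left hp hα) (mul_le_mul_of_nonneg_left hq hβ)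

private lemma comb_le2_aux {α β p q r s : ℝ} (hα : 0 ≤ α) (hβ : 0 ≤ β)
    (hp : p ≤ r) (hq : q ≤ s) : α * p + β * q ≤ α * r + β * s :=
  add_le_add (mul_le_mul_of_nonneg_left hp hα) (mul_le_mul_of_nonneg_left hq hβ)


theorem stmt10 {n : ℕ} (a : Fin (n+1) → ℝ) (ha : StrictMono a)
    (P Q : Set (Fin (n+1) → ℝ))
    (hP : P = {u | u 0 = a 0 ∧ a 0 ≤ u (Fin.last n) ∧ u (Fin.last n) ≤ a (Fin.last n) ∧
      ∀ j : Fin (n+1), j ≠ 0 → j ≠ Fin.last n →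
        a 0 ≤ u j ∧ u j ≤ min (a j) (u (Fin.last n))})
    (v : Fin (n+1) → Fin (n+1) → ℝ) (hv : ∀ j k, v j k = min (a k) (a j))
    (hQ : Q = convexHull ℝ (Set.range v))
    (concEnv : (Fin (n+1) → ℝ) → ℝ → ℝ)
    (hconc : ∀ u t, concEnv u t = sInf {y | ∃ g : ℝ → ℝ,
      ConcaveOn ℝ (Set.Icc (a 0) (a (Fin.last n))) g ∧ (∀ j, u j ≤ g (a j)) ∧ y = g t}) :
    Q ⊆ P ∧
    ∀ u ∈ P,
      (∀ j, u j ≤ concEnv u (a j)) ∧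
      concEnv u (a (Fin.last n)) = u (Fin.last n) ∧
      (fun j => concEnv u (a j)) ∈ Q := by
  have ha0 : ∀ j : Fin (n+1), a 0 ≤ a j := fun j => ha.monotone (Fin.zero_le j)
  have haL : ∀ j : Fin (n+1), a j ≤ a (Fin.last n) := fun j => ha.monotone (Fin.le_last j)
  constructor
  · -- Q ⊆ P
    rw [hQ, hP]
    apply convexHull_min
    · rintro x ⟨k, rfl⟩
      refine ⟨?_, ?_, ?_, ?_⟩
      · rw [hv]; exact min_eq_left (ha0 k)
      · rw [hv]; exact le_min (ha0 (Fin.last n)) (ha0 k)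
      · rw [hv]; exact min_le_left _ _
      · intro j hj0 hjL
        constructor
        · rw [hv]; exact le_min (ha0 j) (ha0 k)
        · rw [hv, hv]
          refine le_min (min_le_left _ _) ?_
          rw [min_eq_right (haL k)]
          exact min_le_right _ _
    · -- P is convex
      intro x hx y hy α β hα hβ hαβ
      simp only [Set.mem_setOf_eq] at hx hy ⊢
      obtain ⟨hx0, hxL0, hxLL, hxm⟩ := hx
      obtain ⟨hy0, hyL0, hyLL, hym⟩ := hy
      simp only [Pi.add_apply, Pi.smul_apply, smul_eq_mul]
      refine ⟨?_, ?_, ?_, ?_⟩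
      · rw [hx0, hy0, ← add_mul, hαβ, one_mul]
      · exact comb_ge_aux hα hβ hαβ hxL0 hyL0
      · exact comb_le_aux hα hβ hαβ hxLL hyLL
      · intro j hj0 hjL
        obtain ⟨hxa, hxb⟩ := hxm j hj0 hjL
        obtain ⟨hya, hyb⟩ := hym j hj0 hjL
        rw [le_min_iff] at hxb hyb
        constructor
        · exact comb_ge_aux hα hβ hαβ hxa hya
        · exact le_min (comb_le_aux hα hβ hαβ hxb.1 hyb.1) (comb_le2_aux hα hβ hxb.2 hyb.2)
  · -- main part
    intro u hu
    rw [hP] at hu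
    obtain ⟨hu0, huL0, huLL, hum⟩ := hu
    set S : ℝ → Set ℝ := fun t => {y | ∃ g : ℝ → ℝ,
      ConcaveOn ℝ (Set.Icc (a 0) (a (Fin.last n))) g ∧ (∀ j, u j ≤ g (a j)) ∧ y = g t}
      with hS_def
    have hcS : ∀ t, concEnv u t = sInf (S t) := fun t => hconc u t
    have hne : ∀ t, (S t).Nonempty := by
      intro t
      refine ⟨_, fun _ => Finset.univ.sup' Finset.univ_nonempty u,
        concaveOn_const _ (convex_Icc _ _), fun j => Finset.le_sup' u (Finset.mem_univ j), rfl⟩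
    have hlb : ∀ j : Fin (n+1), ∀ y ∈ S (a j), u j ≤ y := by
      rintro j y ⟨g, hg, hub, rfl⟩
      exact hub j
    have hbdd : ∀ j : Fin (n+1), BddBelow (S (a j)) := fun j => ⟨u j, hlb j⟩
    have hle : ∀ j, u j ≤ concEnv u (a j) := by
      intro j
      rw [hcS]
      exact le_csInf (hne _) (hlb j)
    -- the witness g₁ t = min t (u last)
    have hg1conc : ConcaveOn ℝ (Set.Icc (a 0) (a (Fin.last n)))
        (fun t : ℝ => min t (u (Fin.last n))) :=
      (concaveOn_id (convex_Icc _ _)).inf (concaveOn_const _ (convex_Icc _ _))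
    have hover : ∀ j, u j ≤ min (a j) (u (Fin.last n)) := by
      intro j
      by_cases hj0 : j = 0
      · subst hj0
        rw [hu0]
        exact le_min le_rfl huL0
      by_cases hjL : j = Fin.last n
      · subst hjL
        exact le_min huLL le_rfl
      · exact (hum j hj0 hjL).2
    have hub : ∀ j, concEnv u (a j) ≤ min (a j) (u (Fin.last n)) := by
      intro j
      rw [hcS]
      exact csInf_le (hbdd j) ⟨_, hg1conc, hover, rfl⟩
    have hLeq : concEnv u (a (Fin.last n)) = u (Fin.last n) :=
      le_antisymm (le_trans (hub _) (min_le_right _ _)) (hle _)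
    have h0eq : concEnv u (a 0) = a 0 :=
      le_antisymm (le_trans (hub 0) (min_le_left _ _)) (hu0 ▸ hle 0)
    refine ⟨hle, hLeq, ?_⟩
    -- concavity of the envelope values
    have hmid : ∀ p q r : Fin (n+1), p < q → q < r →
        (a r - a q) * concEnv u (a p) + (a q - a p) * concEnv u (a r) ≤
          (a r - a p) * concEnv u (a q) := by
      intro p q r hpq hqr
      have hxy : a p < a q := ha hpq
      have hyz : a q < a r := ha hqr
      have hxz : a p < a r := hxy.trans hyz
      have hzx : (0:ℝ) < a r - a p := by linarith
      set lam : ℝ := (a r - a q) / (a r - a p) with hlam_def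
      set mu : ℝ := (a q - a p) / (a r - a p) with hmu_def
      have hlam0 : 0 ≤ lam := div_nonneg (by linarith) hzx.le
      have hmu0 : 0 ≤ mu := div_nonneg (by linarith) hzx.le
      have hsum : lam + mu = 1 := by
        rw [hlam_def, hmu_def, ← add_div, div_eq_one_iff_eq hzx.ne']
        ring
      have hcomb : lam • (a p) + mu • (a r) = a q := by
        rw [smul_eq_mul, smul_eq_mul, hlam_def, hmu_def]
        field_simp
        ring
      have key : lam * concEnv u (a p) + mu * concEnv u (a r) ≤ concEnv u (a q) := by
        rw [hcS (a q)]
        refine le_csInf (hne _) ?_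
        rintro b ⟨g, hg, hov, rfl⟩
        have hpmem : a p ∈ Set.Icc (a 0) (a (Fin.last n)) := ⟨ha0 p, haL p⟩
        have hrmem : a r ∈ Set.Icc (a 0) (a (Fin.last n)) := ⟨ha0 r, haL r⟩
        have hgkey := hg.2 hpmem hrmem hlam0 hmu0 hsum
        rw [hcomb] at hgkey
        have hcp : concEnv u (a p) ≤ g (a p) := by
          rw [hcS]; exact csInf_le (hbdd p) ⟨g, hg, hov, rfl⟩
        have hcr : concEnv u (a r) ≤ g (a r) := by
          rw [hcS]; exact csInf_le (hbdd r) ⟨g, hg, hov, rfl⟩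
        simp only [smul_eq_mul] at hgkey
        exact le_trans (comb_le2_aux hlam0 hmu0 hcp hcr) hgkey
      have hrw : lam * concEnv u (a p) + mu * concEnv u (a r)
          = ((a r - a q) * concEnv u (a p) + (a q - a p) * concEnv u (a r)) / (a r - a p) := by
        rw [hlam_def, hmu_def]
        field_simp
      rw [hrw, div_le_iff₀ hzx] at key
      linarith
    -- now build the convex combination
    set A : ℕ → ℝ := fun i => a ⟨min i n, Nat.lt_succ_of_le (min_le_right i n)⟩ with hA_def
    set SS : ℕ → ℝ := fun i => concEnv u (A i) with hSS_def
    set e : ℕ → ℝ := fun k =>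
      if k = 0 then 1 else if k ≤ n then (SS k - SS (k-1)) / (A k - A (k-1)) else 0 with he_def
    set w : ℕ → ℝ := fun k => e k - e (k+1) with hw_def
    have hAeq : ∀ (i : ℕ) (h : i < n+1), A i = a ⟨i, h⟩ := by
      intro i h
      simp only [hA_def]
      exact congrArg a (Fin.ext (Nat.min_eq_left (Nat.lt_succ_iff.mp h)))
    have hAn : A n = a (Fin.last n) := hAeq n (Nat.lt_succ_self n)
    have hAmono : ∀ i j : ℕ, i ≤ j → (h : j < n+1) → A i ≤ A j := by
      intro i j hij h
      rw [hAeq i (lt_of_le_of_lt hij h), hAeq j h]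
      exact ha.monotone (by simp [Fin.mk_le_mk, hij])
    have hAlt : ∀ k : ℕ, 1 ≤ k → k ≤ n → A (k-1) < A k := by
      intro k h1 h2
      rw [hAeq (k-1) (by omega), hAeq k (by omega)]
      exact ha (by simp only [Fin.mk_lt_mk]; omega)
    have he_mul : ∀ k : ℕ, 1 ≤ k → k ≤ n → e k * (A k - A (k-1)) = SS k - SS (k-1) := by
      intro k h1 h2
      simp only [he_def, if_neg (by omega : ¬ k = 0), if_pos h2]
      exact div_mul_cancel₀ _ (ne_of_gt (sub_pos.2 (hAlt k h1 h2)))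
    have hS0 : SS 0 = A 0 := by
      simp only [hSS_def]
      rw [hAeq 0 (by omega)]
      exact h0eq
    have hSub : ∀ k : ℕ, (h : k < n+1) → SS k ≤ min (A k) (u (Fin.last n)) := by
      intro k h
      simp only [hSS_def]
      rw [hAeq k h]
      exact hub _
    have hSn : SS n = u (Fin.last n) := by
      simp only [hSS_def]
      rw [hAn]
      exact hLeq
    have he0 : e 0 = 1 := by simp [he_def]
    have heBig : ∀ k, n < k → e k = 0 := by
      intro k hk
      simp only [he_def]
      simp only [if_neg (by omega : ¬ k = 0), if_neg (by omega : ¬ k ≤ n)]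
    have hemono : ∀ k : ℕ, k ≤ n → e (k+1) ≤ e k := by
      intro k hk
      rcases Nat.eq_zero_or_pos k with rfl | hk1
      · -- e 1 ≤ e 0 = 1
        rw [he0]
        by_cases hn : 1 ≤ n
        · simp only [he_def, if_neg (by omega : ¬ (0:ℕ)+1 = 0), if_pos (by omega : 0+1 ≤ n)]
          norm_num
          rw [div_le_one (sub_pos.2 (hAlt 1 le_rfl hn))]
          have h1 := hSub 1 (by omega)
          have := min_le_left (A 1) (u (Fin.last n))
          have := hS0
          linarith [le_trans h1 (min_le_left (A 1) (u (Fin.last n)))]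
        · rw [heBig 1 (by omega)]
          norm_num
      rcases eq_or_lt_of_le hk with hkeq | hkn
      · -- e (k+1) = 0 ≤ e k
        rw [heBig (k+1) (by omega)]
        simp only [he_def, if_neg (by omega : ¬ k = 0), if_pos hk]
        apply div_nonneg _ (sub_pos.2 (hAlt k hk1 hk)).le
        have h1 := hSub (k-1) (by omega)
        have h2 : SS (k-1) ≤ u (Fin.last n) :=
          le_trans h1 (min_le_right _ _)
        have h3 : SS k = u (Fin.last n) := by rw [hkeq, hSn]
        linarith
      · -- 1 ≤ k < n : use concavity
        have key := hmid ⟨k-1, by omega⟩ ⟨k, by omega⟩ ⟨k+1, by omega⟩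
          (by simp only [Fin.mk_lt_mk]; omega) (by simp only [Fin.mk_lt_mk]; omega)
        rw [← hAeq (k-1) (by omega), ← hAeq k (by omega), ← hAeq (k+1) (by omega)] at key
        have hk1' : A (k-1) < A k := hAlt k hk1 (by omega)
        have hk2' : A k < A (k+1) := by
          have := hAlt (k+1) (by omega) (by omega)
          simpa using this
        simp only [he_def, if_neg (by omega : ¬ k+1 = 0), if_pos (by omega : k+1 ≤ n),
          if_neg (by omega : ¬ k = 0), if_pos (by omega : k ≤ n), Nat.add_sub_cancel]
        rw [div_le_div_iff₀ (by linarith) (by linarith)]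
        have hkey' : (A (k+1) - A k) * SS (k-1) + (A k - A (k-1)) * SS (k+1)
            ≤ (A (k+1) - A (k-1)) * SS k := key
        nlinarith [hkey']
    have hw0 : ∀ k : ℕ, k ≤ n → 0 ≤ w k := by
      intro k hk
      simp only [hw_def]
      exact sub_nonneg.2 (hemono k hk)
    have hwsum : ∑ k ∈ Finset.range (n+1), w k = 1 := by
      simp only [hw_def]
      rw [Finset.sum_range_sub' e]
      rw [he0, heBig (n+1) (by omega)]
      ring
    have hpart : ∀ m : ℕ, m ≤ n →
        ∑ k ∈ Finset.range (m+1), w k * A k = SS m - e (m+1) * A m := by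
      intro m
      induction m with
      | zero =>
        intro _
        rw [Finset.sum_range_one, hw_def]
        simp only [he0]
        rw [hS0]
        ring
      | succ m ih =>
        intro h
        rw [Finset.sum_range_succ, ih (by omega)]
        have hm := he_mul (m+1) (by omega) h
        rw [Nat.add_sub_cancel] at hm
        have hwm : w (m+1) = e (m+1) - e (m+2) := by simp only [hw_def]
        rw [hwm]
        linear_combination hm
    have htail : ∀ m : ℕ, m ≤ n →
        ∑ k ∈ Finset.Ico (m+1) (n+1), w k = e (m+1) := by
      intro m hm
      rw [Finset.sum_Ico_eq_sub _ (by omega : m+1 ≤ n+1)]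
      rw [hw_def, Finset.sum_range_sub' e, Finset.sum_range_sub' e]
      rw [heBig (n+1) (by omega)]
      ring
    -- the final sum identity
    have hfin : ∀ j : Fin (n+1),
        ∑ k ∈ Finset.range (n+1), w k * min (A j.val) (A k) = concEnv u (a j) := by
      intro j
      have hm : j.val ≤ n := Nat.lt_succ_iff.mp j.isLt
      rw [← Finset.sum_range_add_sum_Ico _ (by omega : j.val + 1 ≤ n+1)]
      have h1 : ∑ k ∈ Finset.range (j.val+1), w k * min (A j.val) (A k)
          = ∑ k ∈ Finset.range (j.val+1), w k * A k := by
        refine Finset.sum_congr rfl ?_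
        intro i hi
        rw [Finset.mem_range] at hi
        rw [min_eq_right (hAmono i j.val (by omega) (by omega))]
      have h2 : ∑ k ∈ Finset.Ico (j.val+1) (n+1), w k * min (A j.val) (A k)
          = ∑ k ∈ Finset.Ico (j.val+1) (n+1), w k * A j.val := by
        refine Finset.sum_congr rfl ?_
        intro i hi
        rw [Finset.mem_Ico] at hi
        rw [min_eq_left (hAmono j.val i (by omega) (by omega))]
      rw [h1, h2, hpart j.val hm, ← Finset.sum_mul, htail j.val hm]
      have : SS j.val = concEnv u (a j) := by
        simp only [hSS_def]
        rw [hAeq j.val j.isLt, Fin.eta]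
      linarith [this]
    -- conclude
    rw [hQ]
    have hmem := Finset.centerMass_mem_convexHull (Finset.univ : Finset (Fin (n+1)))
      (w := fun k : Fin (n+1) => w k.val)
      (fun i _ => hw0 i.val (Nat.lt_succ_iff.mp i.isLt))
      (by
        rw [Fin.sum_univ_eq_sum_range (fun k => w k) (n+1), hwsum]
        norm_num)
      (z := v) (fun i _ => Set.mem_range_self i)
    rw [Finset.centerMass_eq_of_sum_1] at hmem
    · convert hmem using 1
      funext j
      rw [Finset.sum_apply]
      simp only [Pi.smul_apply, smul_eq_mul]
      have : ∀ k : Fin (n+1), w k.val * v k j = w k.val * min (A j.val) (A k.val) := by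
        intro k
        rw [hv, hAeq j.val j.isLt, hAeq k.val k.isLt, Fin.eta, Fin.eta]
      rw [Finset.sum_congr rfl (fun k _ => this k),
        Fin.sum_univ_eq_sum_range (fun k => w k * min (A j.val) (A k)) (n+1), hfin j]
    · rw [Fin.sum_univ_eq_sum_range (fun k => w k) (n+1), hwsum]
end

section
/- Fix strictly increasing breakpoints a_{i0} < ⋯ < a_{in} for i = 1, 2 and let Q = Q_1 × Q_2 where Q_i = conv({v_{i0},…,v_{in}}) with v_{ij} = (min{a_{i0},a_{ij}},…,min{a_{in},a_{ij}}). The concave envelope of the bilinear function s ↦ s_{1n}·s_{2n} over Q is given by min over all staircases π from (0,0) to (n,n) of the affine functions ĥ_π(s) = a_{10}a_{20} + Σ_{t: π_t=1} a_{2 p^t_2}(s_{1 p^t_1} − s_{1 p^{t−1}_1}) + Σ_{t: π_t=2} a_{1 p^t_1}(s_{2 p^t_2} − s_{2 p^{t−1}_2}), where p^0 = (0,0), p^{2n} = (n,n), and p^t − p^{t−1} = e_{π_t}. -/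
/-- Clamp a natural number index into `Fin (n+1)`. -/
def idx (n i : ℕ) : Fin (n+1) := ⟨min i n, by omega⟩

/-- A staircase lattice path from `(0,0)` to `(n,n)` on the grid `{0,…,n}²`,
recorded by its sequence of `2n+1` points. -/
def IsStaircase (n : ℕ) (p : Fin (2*n+1) → ℕ × ℕ) : Prop :=
  p 0 = (0, 0) ∧ p (Fin.last (2*n)) = (n, n) ∧
  ∀ t : Fin (2*n),
    p t.succ = ((p t.castSucc).1 + 1, (p t.castSucc).2) ∨
    p t.succ = ((p t.castSucc).1, (p t.castSucc).2 + 1)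

/-- The affine interpolant of the bilinear function associated with a staircase. -/
noncomputable def stairVal (n : ℕ) (a₁ a₂ : Fin (n+1) → ℝ)
    (p : Fin (2*n+1) → ℕ × ℕ) (s : (Fin (n+1) → ℝ) × (Fin (n+1) → ℝ)) : ℝ :=
  a₁ 0 * a₂ 0 + ∑ t : Fin (2*n),
    if (p t.succ).1 = (p t.castSucc).1 + 1 then
      a₂ (idx n ((p t.succ).2)) * (s.1 (idx n ((p t.succ).1)) - s.1 (idx n ((p t.castSucc).1)))
    else
      a₁ (idx n ((p t.succ).1)) * (s.2 (idx n ((p t.succ).2)) - s.2 (idx n ((p t.castSucc).2)))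

open Finset

section Helpers

variable {n : ℕ}

lemma idx_val (m : ℕ) : (idx n m).val = min m n := rfl

lemma idx_self (K : Fin (n+1)) : idx n K.val = K := by
  apply Fin.ext; simp [idx_val]; omega

lemma idx_min (m k : ℕ) : min (idx n m) (idx n k) = idx n (min m k) := by
  apply Fin.ext
  have : (min (idx n m) (idx n k)).val = min (idx n m).val (idx n k).val := by
    rcases le_total (idx n m) (idx n k) with h | h
    · simp [min_eq_left h, Nat.min_eq_left (Fin.le_def.mp h)]
    · simp [min_eq_right h, Nat.min_eq_right (Fin.le_def.mp h)]
  rw [this]; simp only [idx_val]; omega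

lemma idx_le_last (m : ℕ) : idx n m ≤ Fin.last n := by
  simp only [Fin.le_def, idx_val, Fin.last]; omega

-- vertex evaluation
lemma v_apply {a : Fin (n+1) → ℝ} (ha : Monotone a) {v : Fin (n+1) → Fin (n+1) → ℝ}
    (hv : ∀ j k, v j k = min (a k) (a j)) (m : ℕ) (K : Fin (n+1)) :
    v (idx n m) K = a (idx n (min m K.val)) := by
  rw [hv, min_comm, ← ha.map_min]
  congr 1
  rw [← idx_self K, idx_min, idx_self K]

lemma v_last {a : Fin (n+1) → ℝ} (ha : Monotone a) {v : Fin (n+1) → Fin (n+1) → ℝ}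
    (hv : ∀ j k, v j k = min (a k) (a j)) (j : Fin (n+1)) :
    v j (Fin.last n) = a j := by
  rw [hv, min_eq_right (ha (Fin.le_last j))]

lemma v_inj {a : Fin (n+1) → ℝ} (ha : StrictMono a) {v : Fin (n+1) → Fin (n+1) → ℝ}
    (hv : ∀ j k, v j k = min (a k) (a j)) : Function.Injective v := by
  intro j j' h
  have := congrFun h (Fin.last n)
  rw [v_last ha.monotone hv, v_last ha.monotone hv] at this
  exact ha.injective this

/-- representation of points in the hull of the range -/
lemma hull_rep {a : Fin (n+1) → ℝ} (ha : StrictMono a) {v : Fin (n+1) → Fin (n+1) → ℝ}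
    (hv : ∀ j k, v j k = min (a k) (a j)) {x : Fin (n+1) → ℝ}
    (hx : x ∈ convexHull ℝ (Set.range v)) :
    ∃ w : Fin (n+1) → ℝ, (∀ j, 0 ≤ w j) ∧ ∑ j, w j = 1 ∧ x = ∑ j, w j • v j := by
  classical
  have hrange : Set.range v = ↑(Finset.univ.image v) := by
    simp
  rw [hrange, Finset.convexHull_eq] at hx
  obtain ⟨w, hw0, hw1, hwc⟩ := hx
  refine ⟨fun j => w (v j), fun j => hw0 _ (by simp), ?_, ?_⟩
  · rw [← hw1]
    rw [Finset.sum_image (fun a _ b _ h => v_inj ha hv h)]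
  · rw [← hwc, Finset.centerMass_eq_of_sum_1 _ _ hw1]
    rw [Finset.sum_image (fun a _ b _ h => v_inj ha hv h)]
    simp

/-- Abel summation -/
lemma abel_sum (Θ F : ℕ → ℝ) (T : ℕ) :
    ∑ t ∈ range (T+1), (Θ t - Θ (t+1)) * F t
      = Θ 0 * F 0 - Θ (T+1) * F T + ∑ t ∈ range T, Θ (t+1) * (F (t+1) - F t) := by
  induction T with
  | zero => simp; ring
  | succ T ih => rw [sum_range_succ, ih, sum_range_succ]; ring

/-- affine maps commute with convex (affine) combinations -/
lemma aff_comb {E : Type*} [AddCommGroup E] [Module ℝ E] (c : E →ᵃ[ℝ] ℝ)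
    {ι : Type*} (S : Finset ι) (lam : ι → ℝ) (x : ι → E) (h1 : ∑ i ∈ S, lam i = 1) :
    c (∑ i ∈ S, lam i • x i) = ∑ i ∈ S, lam i * c (x i) := by
  have hd : ∀ y, c y = c.linear y + c 0 := by
    intro y; conv_lhs => rw [AffineMap.decomp c]
    simp
  rw [hd, map_sum]
  have : ∀ i ∈ S, c.linear (lam i • x i) = lam i * c.linear (x i) := by
    intro i _; rw [map_smul]; simp
  rw [Finset.sum_congr rfl this]
  have : ∀ i ∈ S, lam i * c (x i) = lam i * c.linear (x i) + lam i * c 0 := by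
    intro i _; rw [hd (x i)]; ring
  rw [Finset.sum_congr rfl this, Finset.sum_add_distrib, ← Finset.sum_mul, h1, one_mul]

end Helpers
section Affine

variable {n : ℕ}

abbrev Espc (n : ℕ) := (Fin (n+1) → ℝ) × (Fin (n+1) → ℝ)

noncomputable def e₁ (n : ℕ) (k : Fin (n+1)) : Espc n →ₗ[ℝ] ℝ :=
  (LinearMap.proj k).comp (LinearMap.fst ℝ _ _)

noncomputable def e₂ (n : ℕ) (k : Fin (n+1)) : Espc n →ₗ[ℝ] ℝ :=
  (LinearMap.proj k).comp (LinearMap.snd ℝ _ _)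

open Classical in
noncomputable def stairLin (n : ℕ) (a₁ a₂ : Fin (n+1) → ℝ) (p : Fin (2*n+1) → ℕ × ℕ) :
    Espc n →ₗ[ℝ] ℝ :=
  ∑ t : Fin (2*n),
    if (p t.succ).1 = (p t.castSucc).1 + 1 then
      a₂ (idx n ((p t.succ).2)) • (e₁ n (idx n ((p t.succ).1)) - e₁ n (idx n ((p t.castSucc).1)))
    else
      a₁ (idx n ((p t.succ).1)) • (e₂ n (idx n ((p t.succ).2)) - e₂ n (idx n ((p t.castSucc).2)))

lemma stairVal_eq_lin (a₁ a₂ : Fin (n+1) → ℝ) (p : Fin (2*n+1) → ℕ × ℕ) (s : Espc n) :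
    stairVal n a₁ a₂ p s = a₁ 0 * a₂ 0 + stairLin n a₁ a₂ p s := by
  classical
  rw [stairVal, stairLin]
  congr 1
  rw [LinearMap.coe_sum, Finset.sum_apply]
  refine Finset.sum_congr rfl (fun t _ => ?_)
  rw [apply_ite (fun (F : Espc n →ₗ[ℝ] ℝ) => F s)]
  congr 1

noncomputable def stairAff (n : ℕ) (a₁ a₂ : Fin (n+1) → ℝ) (p : Fin (2*n+1) → ℕ × ℕ) :
    Espc n →ᵃ[ℝ] ℝ :=
  AffineMap.mk' (stairVal n a₁ a₂ p) (stairLin n a₁ a₂ p) 0 (by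
    intro q
    rw [stairVal_eq_lin, stairVal_eq_lin]
    simp
    ring)

lemma stairAff_apply (a₁ a₂ : Fin (n+1) → ℝ) (p : Fin (2*n+1) → ℕ × ℕ) (s : Espc n) :
    stairAff n a₁ a₂ p s = stairVal n a₁ a₂ p s := rfl

end Affine
section Path

variable {n : ℕ}

def pathPt (n : ℕ) (p : Fin (2*n+1) → ℕ × ℕ) (t : ℕ) : ℕ × ℕ := p ⟨min t (2*n), by omega⟩

variable (p : Fin (2*n+1) → ℕ × ℕ)

lemma pathPt_eq (t : ℕ) (ht : t ≤ 2*n) : pathPt n p t = p ⟨t, by omega⟩ := by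
  unfold pathPt; congr 1; exact Fin.ext (by simp; omega)

variable (hp : IsStaircase n p)
include hp

lemma pathPt_zero : pathPt n p 0 = (0, 0) := by
  rw [pathPt_eq p 0 (by omega)]
  have : (⟨0, by omega⟩ : Fin (2*n+1)) = 0 := Fin.ext (by simp)
  rw [this]; exact hp.1

lemma pathPt_last : pathPt n p (2*n) = (n, n) := by
  rw [pathPt_eq p (2*n) (by omega)]
  have : (⟨2*n, by omega⟩ : Fin (2*n+1)) = Fin.last (2*n) := Fin.ext (by simp [Fin.last])
  rw [this]; exact hp.2.1

lemma pathPt_step (t : ℕ) (ht : t < 2*n) :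
    pathPt n p (t+1) = ((pathPt n p t).1 + 1, (pathPt n p t).2) ∨
    pathPt n p (t+1) = ((pathPt n p t).1, (pathPt n p t).2 + 1) := by
  have h := hp.2.2 ⟨t, ht⟩
  have h1 : p ((⟨t, ht⟩ : Fin (2*n)).succ) = pathPt n p (t+1) := by
    rw [pathPt_eq p (t+1) (by omega)]; congr 1
  have h2 : p ((⟨t, ht⟩ : Fin (2*n)).castSucc) = pathPt n p t := by
    rw [pathPt_eq p t (by omega)]; congr 1
  rw [h1, h2] at h
  exact h

lemma pathPt_mono_fst : ∀ t t', t ≤ t' → t' ≤ 2*n → (pathPt n p t).1 ≤ (pathPt n p t').1 := by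
  intro t t' h h2n
  induction t' with
  | zero =>
    have ht0 : t = 0 := by omega
    rw [ht0]
  | succ t' ih =>
    rcases Nat.lt_or_ge t (t'+1) with h' | h'
    · have hle : (pathPt n p t).1 ≤ (pathPt n p t').1 := ih (by omega) (by omega)
      rcases pathPt_step p hp t' (by omega) with hst | hst <;> rw [hst] <;> simp <;> omega
      
    · have ht1 : t = t'+1 := by omega
      rw [ht1]

lemma pathPt_mono_snd : ∀ t t', t ≤ t' → t' ≤ 2*n → (pathPt n p t).2 ≤ (pathPt n p t').2 := by
  intro t t' h h2n
  induction t' with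
  | zero =>
    have ht0 : t = 0 := by omega
    rw [ht0]
  | succ t' ih =>
    rcases Nat.lt_or_ge t (t'+1) with h' | h'
    · have hle : (pathPt n p t).2 ≤ (pathPt n p t').2 := ih (by omega) (by omega)
      rcases pathPt_step p hp t' (by omega) with hst | hst <;> rw [hst] <;> simp <;> omega
      
    · have ht1 : t = t'+1 := by omega
      rw [ht1]

lemma pathPt_fst_le (t : ℕ) (ht : t ≤ 2*n) : (pathPt n p t).1 ≤ n := by
  have := pathPt_mono_fst p hp t (2*n) ht (le_refl _)
  rwa [pathPt_last p hp] at this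

lemma pathPt_snd_le (t : ℕ) (ht : t ≤ 2*n) : (pathPt n p t).2 ≤ n := by
  have := pathPt_mono_snd p hp t (2*n) ht (le_refl _)
  rwa [pathPt_last p hp] at this

omit hp

lemma stairVal_range (a₁ a₂ : Fin (n+1) → ℝ) (s : Espc n) :
    stairVal n a₁ a₂ p s = a₁ 0 * a₂ 0 +
      ∑ t ∈ Finset.range (2*n),
        (if (pathPt n p (t+1)).1 = (pathPt n p t).1 + 1 then
          a₂ (idx n ((pathPt n p (t+1)).2)) *
            (s.1 (idx n ((pathPt n p (t+1)).1)) - s.1 (idx n ((pathPt n p t).1)))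
        else
          a₁ (idx n ((pathPt n p (t+1)).1)) *
            (s.2 (idx n ((pathPt n p (t+1)).2)) - s.2 (idx n ((pathPt n p t).2)))) := by
  rw [stairVal]
  congr 1
  rw [← Fin.sum_univ_eq_sum_range (fun t =>
        (if (pathPt n p (t+1)).1 = (pathPt n p t).1 + 1 then
          a₂ (idx n ((pathPt n p (t+1)).2)) *
            (s.1 (idx n ((pathPt n p (t+1)).1)) - s.1 (idx n ((pathPt n p t).1)))
        else
          a₁ (idx n ((pathPt n p (t+1)).1)) *
            (s.2 (idx n ((pathPt n p (t+1)).2)) - s.2 (idx n ((pathPt n p t).2))))) (2*n)]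
  refine Finset.sum_congr rfl fun t _ => ?_
  have h1 : p t.succ = pathPt n p (t.val+1) := by
    rw [pathPt_eq p (t.val+1) (by omega)]; congr 1
  have h2 : p t.castSucc = pathPt n p t.val := by
    rw [pathPt_eq p t.val (by omega)]; congr 1
  rw [h1, h2]

end Path
section Star

variable {n : ℕ} {a₁ a₂ : Fin (n+1) → ℝ} {v₁ v₂ : Fin (n+1) → Fin (n+1) → ℝ}
  (hv₁ : ∀ j k, v₁ j k = min (a₁ k) (a₁ j)) (hv₂ : ∀ j k, v₂ j k = min (a₂ k) (a₂ j))
  (ha₁ : Monotone a₁) (ha₂ : Monotone a₂)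

lemma v_apply_idx {a : Fin (n+1) → ℝ} (ha : Monotone a) {v : Fin (n+1) → Fin (n+1) → ℝ}
    (hv : ∀ j k, v j k = min (a k) (a j)) (I m : ℕ) (hI : I ≤ n) :
    v (idx n I) (idx n m) = a (idx n (min m I)) := by
  rw [v_apply ha hv]
  congr 1
  exact Fin.ext (by simp only [idx_val]; omega)

lemma idx_zero : idx n 0 = 0 := Fin.ext (by simp [idx_val])

lemma idx_mono {m m' : ℕ} (h : m ≤ m') : idx n m ≤ idx n m' := by
  simp only [Fin.le_def, idx_val]; omega

include hv₁ hv₂ ha₁ ha₂ in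
lemma star_le {p : Fin (2*n+1) → ℕ × ℕ} (hp : IsStaircase n p) (I J : ℕ)
    (hI : I ≤ n) (hJ : J ≤ n) :
    a₁ (idx n I) * a₂ (idx n J) ≤ stairVal n a₁ a₂ p (v₁ (idx n I), v₂ (idx n J)) := by
  rw [stairVal_range]
  have hred1 : (v₁ (idx n I), v₂ (idx n J)).1 = v₁ (idx n I) := rfl
  have hred2 : (v₁ (idx n I), v₂ (idx n J)).2 = v₂ (idx n J) := rfl
  simp only [hred1, hred2]
  set H : ℕ → ℝ := fun t =>
    a₁ (idx n (min (pathPt n p t).1 I)) * a₂ (idx n (min (pathPt n p t).2 J)) with hH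
  have hterm : ∀ t ∈ Finset.range (2*n), H (t+1) - H t ≤
      (if (pathPt n p (t+1)).1 = (pathPt n p t).1 + 1 then
        a₂ (idx n ((pathPt n p (t+1)).2)) *
          (v₁ (idx n I) (idx n ((pathPt n p (t+1)).1)) - v₁ (idx n I) (idx n ((pathPt n p t).1)))
      else
        a₁ (idx n ((pathPt n p (t+1)).1)) *
          (v₂ (idx n J) (idx n ((pathPt n p (t+1)).2)) - v₂ (idx n J) (idx n ((pathPt n p t).2)))) := by
    intro t htm
    have ht : t < 2*n := Finset.mem_range.mp htm
    rcases pathPt_step p hp t ht with hst | hst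
    · have hc1 : (pathPt n p (t+1)).1 = (pathPt n p t).1 + 1 := by rw [hst]
      have hc2 : (pathPt n p (t+1)).2 = (pathPt n p t).2 := by rw [hst]
      rw [if_pos hc1]
      simp only [hH]
      rw [hc1, hc2, v_apply_idx ha₁ hv₁ _ _ hI, v_apply_idx ha₁ hv₁ _ _ hI]
      have h1 : a₁ (idx n (min (pathPt n p t).1 I)) ≤
          a₁ (idx n (min ((pathPt n p t).1 + 1) I)) := ha₁ (idx_mono (by omega))
      have h2 : a₂ (idx n (min (pathPt n p t).2 J)) ≤ a₂ (idx n ((pathPt n p t).2)) :=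
        ha₂ (idx_mono (by omega))
      nlinarith [h1, h2]
    · have hc1 : (pathPt n p (t+1)).1 = (pathPt n p t).1 := by rw [hst]
      have hc2 : (pathPt n p (t+1)).2 = (pathPt n p t).2 + 1 := by rw [hst]
      rw [if_neg (by omega)]
      simp only [hH]
      rw [hc1, hc2, v_apply_idx ha₂ hv₂ _ _ hJ, v_apply_idx ha₂ hv₂ _ _ hJ]
      have h1 : a₂ (idx n (min (pathPt n p t).2 J)) ≤
          a₂ (idx n (min ((pathPt n p t).2 + 1) J)) := ha₂ (idx_mono (by omega))
      have h2 : a₁ (idx n (min (pathPt n p t).1 I)) ≤ a₁ (idx n ((pathPt n p t).1)) :=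
        ha₁ (idx_mono (by omega))
      nlinarith [h1, h2]
  have hsum := Finset.sum_le_sum hterm
  rw [Finset.sum_range_sub H (2*n)] at hsum
  have hH2n : H (2*n) = a₁ (idx n I) * a₂ (idx n J) := by
    simp only [hH, pathPt_last p hp]
    rw [Nat.min_eq_right hI, Nat.min_eq_right hJ]
  have hH0 : H 0 = a₁ 0 * a₂ 0 := by
    simp only [hH, pathPt_zero p hp]
    simp [idx_zero]
  rw [hH2n, hH0] at hsum
  linarith

include hv₁ hv₂ ha₁ ha₂ in
lemma star_eq {p : Fin (2*n+1) → ℕ × ℕ} (hp : IsStaircase n p) (t₀ : ℕ) (ht₀ : t₀ ≤ 2*n)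
    (I J : ℕ) (hIJ : pathPt n p t₀ = (I, J)) :
    stairVal n a₁ a₂ p (v₁ (idx n I), v₂ (idx n J)) = a₁ (idx n I) * a₂ (idx n J) := by
  have hI : I ≤ n := by
    have := pathPt_fst_le p hp t₀ ht₀; rwa [hIJ] at this
  have hJ : J ≤ n := by
    have := pathPt_snd_le p hp t₀ ht₀; rwa [hIJ] at this
  rw [stairVal_range]
  have hred1 : (v₁ (idx n I), v₂ (idx n J)).1 = v₁ (idx n I) := rfl
  have hred2 : (v₁ (idx n I), v₂ (idx n J)).2 = v₂ (idx n J) := rfl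
  simp only [hred1, hred2]
  set H : ℕ → ℝ := fun t =>
    a₁ (idx n (min (pathPt n p t).1 I)) * a₂ (idx n (min (pathPt n p t).2 J)) with hH
  have hterm : ∀ t ∈ Finset.range (2*n),
      (if (pathPt n p (t+1)).1 = (pathPt n p t).1 + 1 then
        a₂ (idx n ((pathPt n p (t+1)).2)) *
          (v₁ (idx n I) (idx n ((pathPt n p (t+1)).1)) - v₁ (idx n I) (idx n ((pathPt n p t).1)))
      else
        a₁ (idx n ((pathPt n p (t+1)).1)) *
          (v₂ (idx n J) (idx n ((pathPt n p (t+1)).2)) - v₂ (idx n J) (idx n ((pathPt n p t).2))))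
      = H (t+1) - H t := by
    intro t htm
    have ht : t < 2*n := Finset.mem_range.mp htm
    rcases le_or_gt (t+1) t₀ with hcase | hcase
    · have c1 : (pathPt n p (t+1)).1 ≤ I := by
        have := pathPt_mono_fst p hp (t+1) t₀ hcase ht₀; rwa [hIJ] at this
      have c2 : (pathPt n p (t+1)).2 ≤ J := by
        have := pathPt_mono_snd p hp (t+1) t₀ hcase ht₀; rwa [hIJ] at this
      rcases pathPt_step p hp t ht with hst | hst
      · have hc1 : (pathPt n p (t+1)).1 = (pathPt n p t).1 + 1 := by rw [hst]
        have hc2 : (pathPt n p (t+1)).2 = (pathPt n p t).2 := by rw [hst]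
        rw [if_pos hc1]
        simp only [hH]
        simp only [hc1, hc2] at c1 c2 ⊢
        rw [v_apply_idx ha₁ hv₁ _ _ hI, v_apply_idx ha₁ hv₁ _ _ hI]
        rw [Nat.min_eq_left (by omega : (pathPt n p t).1 + 1 ≤ I),
          Nat.min_eq_left (by omega : (pathPt n p t).1 ≤ I),
          Nat.min_eq_left (by omega : (pathPt n p t).2 ≤ J)]
        ring
      · have hc1 : (pathPt n p (t+1)).1 = (pathPt n p t).1 := by rw [hst]
        have hc2 : (pathPt n p (t+1)).2 = (pathPt n p t).2 + 1 := by rw [hst]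
        rw [if_neg (by omega)]
        simp only [hH]
        simp only [hc1, hc2] at c1 c2 ⊢
        rw [v_apply_idx ha₂ hv₂ _ _ hJ, v_apply_idx ha₂ hv₂ _ _ hJ]
        rw [Nat.min_eq_left (by omega : (pathPt n p t).2 + 1 ≤ J),
          Nat.min_eq_left (by omega : (pathPt n p t).2 ≤ J),
          Nat.min_eq_left (by omega : (pathPt n p t).1 ≤ I)]
        ring
    · have c1 : I ≤ (pathPt n p t).1 := by
        have := pathPt_mono_fst p hp t₀ t (by omega) (by omega); rwa [hIJ] at this
      have c2 : J ≤ (pathPt n p t).2 := by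
        have := pathPt_mono_snd p hp t₀ t (by omega) (by omega); rwa [hIJ] at this
      rcases pathPt_step p hp t ht with hst | hst
      · have hc1 : (pathPt n p (t+1)).1 = (pathPt n p t).1 + 1 := by rw [hst]
        have hc2 : (pathPt n p (t+1)).2 = (pathPt n p t).2 := by rw [hst]
        rw [if_pos hc1]
        simp only [hH]
        rw [hc1, hc2]
        rw [v_apply_idx ha₁ hv₁ _ _ hI, v_apply_idx ha₁ hv₁ _ _ hI]
        rw [Nat.min_eq_right (by omega : I ≤ (pathPt n p t).1 + 1),
          Nat.min_eq_right (by omega : I ≤ (pathPt n p t).1)]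
        ring
      · have hc1 : (pathPt n p (t+1)).1 = (pathPt n p t).1 := by rw [hst]
        have hc2 : (pathPt n p (t+1)).2 = (pathPt n p t).2 + 1 := by rw [hst]
        rw [if_neg (by omega)]
        simp only [hH]
        rw [hc1, hc2]
        rw [v_apply_idx ha₂ hv₂ _ _ hJ, v_apply_idx ha₂ hv₂ _ _ hJ]
        rw [Nat.min_eq_right (by omega : J ≤ (pathPt n p t).2 + 1),
          Nat.min_eq_right (by omega : J ≤ (pathPt n p t).2)]
        ring
  rw [Finset.sum_congr rfl hterm, Finset.sum_range_sub H (2*n)]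
  have hH2n : H (2*n) = a₁ (idx n I) * a₂ (idx n J) := by
    simp only [hH, pathPt_last p hp]
    rw [Nat.min_eq_right hI, Nat.min_eq_right hJ]
  have hH0 : H 0 = a₁ 0 * a₂ 0 := by
    simp only [hH, pathPt_zero p hp]
    simp [idx_zero]
  rw [hH2n, hH0]
  ring

end Star
section Construct

open Classical in
/-- Walk: go right when `ν (j+1) ≤ μ (i+1)` (or forced). -/
noncomputable def stairF (n : ℕ) (μ ν : ℕ → ℝ) : ℕ → ℕ × ℕ
  | 0 => (0, 0)
  | t+1 =>
    let q := stairF n μ ν t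
    if q.1 < n ∧ (q.2 = n ∨ ν (q.2+1) ≤ μ (q.1+1)) then (q.1+1, q.2) else (q.1, q.2+1)

open Classical in
noncomputable def stairTh (n : ℕ) (μ ν : ℕ → ℝ) : ℕ → ℝ
  | 0 => 1
  | t+1 =>
    if t+1 ≤ 2*n then
      (if (stairF n μ ν (t+1)).1 = (stairF n μ ν t).1 + 1 then μ ((stairF n μ ν (t+1)).1)
       else ν ((stairF n μ ν (t+1)).2))
    else 0

variable {n : ℕ} {μ ν : ℕ → ℝ}

open Classical in
lemma stairF_succ (t : ℕ) :
    stairF n μ ν (t+1) =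
      if (stairF n μ ν t).1 < n ∧
          ((stairF n μ ν t).2 = n ∨ ν ((stairF n μ ν t).2+1) ≤ μ ((stairF n μ ν t).1+1)) then
        ((stairF n μ ν t).1+1, (stairF n μ ν t).2)
      else ((stairF n μ ν t).1, (stairF n μ ν t).2+1) := by
  rw [stairF]

lemma stairF_step (t : ℕ) :
    stairF n μ ν (t+1) = ((stairF n μ ν t).1 + 1, (stairF n μ ν t).2) ∨
    stairF n μ ν (t+1) = ((stairF n μ ν t).1, (stairF n μ ν t).2 + 1) := by
  rw [stairF_succ]
  split <;> [left; right] <;> rfl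

/-- the walk goes right at step `t+1` iff the comparison condition holds at `stairF t`. -/
lemma stairF_right_iff (t : ℕ) :
    (stairF n μ ν (t+1)).1 = (stairF n μ ν t).1 + 1 ↔
      ((stairF n μ ν t).1 < n ∧
        ((stairF n μ ν t).2 = n ∨ ν ((stairF n μ ν t).2+1) ≤ μ ((stairF n μ ν t).1+1))) := by
  constructor
  · intro h
    by_contra hc
    rw [stairF_succ, if_neg hc] at h
    simp at h
  · intro h
    rw [stairF_succ, if_pos h]

lemma stairF_sum (t : ℕ) : (stairF n μ ν t).1 + (stairF n μ ν t).2 = t := by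
  induction t with
  | zero => rfl
  | succ t ih => rcases stairF_step (μ := μ) (ν := ν) t with h | h <;> rw [h] <;> simp <;> omega

lemma stairF_bounds (hn : 0 < n) : ∀ t, t ≤ 2*n →
    (stairF n μ ν t).1 ≤ n ∧ (stairF n μ ν t).2 ≤ n := by
  intro t
  induction t with
  | zero => intro _; constructor <;> simp [stairF]
  | succ t ih =>
    intro ht
    obtain ⟨ih1, ih2⟩ := ih (by omega)
    have hsum := stairF_sum (n := n) (μ := μ) (ν := ν) t
    rw [stairF_succ]
    split
    · rename_i hcond
      simp only
      exact ⟨by omega, by omega⟩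
    · rename_i hcond
      simp only
      refine ⟨by omega, ?_⟩
      by_cases h1 : (stairF n μ ν t).1 < n
      · have : ¬((stairF n μ ν t).2 = n ∨ ν ((stairF n μ ν t).2+1) ≤ μ ((stairF n μ ν t).1+1)) := by
          intro hd; exact hcond ⟨h1, hd⟩
        push_neg at this
        omega
      · omega

lemma stairF_last (hn : 0 < n) : stairF n μ ν (2*n) = (n, n) := by
  have h := stairF_bounds (μ := μ) (ν := ν) hn (2*n) (le_refl _)
  have hsum := stairF_sum (n := n) (μ := μ) (ν := ν) (2*n)
  have h1 : (stairF n μ ν (2*n)).1 = n := by omega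
  have h2 : (stairF n μ ν (2*n)).2 = n := by omega
  rw [Prod.ext_iff]
  exact ⟨h1, h2⟩

lemma stairF_mono_fst {t t' : ℕ} (h : t ≤ t') : (stairF n μ ν t).1 ≤ (stairF n μ ν t').1 := by
  induction t' with
  | zero =>
    have ht0 : t = 0 := by omega
    rw [ht0]
  | succ t' ih =>
    rcases Nat.lt_or_ge t (t'+1) with h' | h'
    · have := ih (by omega)
      rcases stairF_step (μ := μ) (ν := ν) t' with hst | hst <;> rw [hst] <;> simp <;> omega
    · have : t = t'+1 := by omega
      rw [this]

lemma stairF_mono_snd {t t' : ℕ} (h : t ≤ t') : (stairF n μ ν t).2 ≤ (stairF n μ ν t').2 := by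
  induction t' with
  | zero =>
    have ht0 : t = 0 := by omega
    rw [ht0]
  | succ t' ih =>
    rcases Nat.lt_or_ge t (t'+1) with h' | h'
    · have := ih (by omega)
      rcases stairF_step (μ := μ) (ν := ν) t' with hst | hst <;> rw [hst] <;> simp <;> omega
    · have : t = t'+1 := by omega
      rw [this]

/-- the induced staircase -/
noncomputable def stairP (n : ℕ) (μ ν : ℕ → ℝ) : Fin (2*n+1) → ℕ × ℕ :=
  fun t => stairF n μ ν t.val

lemma stairP_isStaircase (hn : 0 < n) : IsStaircase n (stairP n μ ν) := by
  refine ⟨rfl, ?_, ?_⟩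
  · show stairF n μ ν (Fin.last (2*n)).val = (n, n)
    simp only [Fin.val_last]
    exact stairF_last hn
  · intro t
    have h1 : (stairP n μ ν) t.succ = stairF n μ ν (t.val+1) := rfl
    have h2 : (stairP n μ ν) t.castSucc = stairF n μ ν t.val := rfl
    rw [h1, h2]
    exact stairF_step t.val

lemma pathPt_stairP (t : ℕ) (ht : t ≤ 2*n) :
    pathPt n (stairP n μ ν) t = stairF n μ ν t := by
  rw [pathPt_eq _ t ht]
  rfl

end Construct
section Theta

variable {n : ℕ} {μ ν : ℕ → ℝ}

lemma stairTh_zero : stairTh n μ ν 0 = 1 := rfl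

open Classical in
lemma stairTh_succ (t : ℕ) :
    stairTh n μ ν (t+1) =
      if t+1 ≤ 2*n then
        (if (stairF n μ ν (t+1)).1 = (stairF n μ ν t).1 + 1 then μ ((stairF n μ ν (t+1)).1)
         else ν ((stairF n μ ν (t+1)).2))
      else 0 := by
  rw [stairTh]

variable (hμ0 : ∀ i, 0 ≤ μ i) (hν0 : ∀ i, 0 ≤ ν i)
  (hμa : ∀ i, μ (i+1) ≤ μ i) (hνa : ∀ i, ν (i+1) ≤ ν i)
  (hμ1 : μ 1 ≤ 1) (hν1 : ν 1 ≤ 1)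

include hμ0 hν0 in
lemma stairTh_nonneg (t : ℕ) : 0 ≤ stairTh n μ ν t := by
  cases t with
  | zero => rw [stairTh_zero]; norm_num
  | succ t =>
    rw [stairTh_succ]
    split
    · split
      · exact hμ0 _
      · exact hν0 _
    · exact le_refl 0

include hμ0 hν0 hμa hνa hμ1 hν1 in
lemma stairTh_antitone (hn : 0 < n) (t : ℕ) :
    stairTh n μ ν (t+1) ≤ stairTh n μ ν t := by
  cases t with
  | zero =>
    rw [stairTh_zero, stairTh_succ, if_pos (by omega : 0+1 ≤ 2*n)]
    split
    · rename_i hc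
      have h1 : (stairF n μ ν (0+1)).1 = 1 := by rw [hc]; rfl
      rw [h1]; exact hμ1
    · rename_i hc
      rcases stairF_step (n := n) (μ := μ) (ν := ν) 0 with hst | hst
      · exact absurd (by rw [hst]) hc
      · have h1 : (stairF n μ ν (0+1)).2 = 1 := by rw [hst]; rfl
        rw [h1]; exact hν1
  | succ t =>
    by_cases h2 : t+1+1 ≤ 2*n
    · have h1 : t+1 ≤ 2*n := by omega
      rw [stairTh_succ (t+1), stairTh_succ t, if_pos h2, if_pos h1]
      rcases stairF_step (n := n) (μ := μ) (ν := ν) (t+1) with hst2 | hst2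
      · -- step t+2 goes right
        have hc2 : (stairF n μ ν (t+1+1)).1 = (stairF n μ ν (t+1)).1 + 1 := by rw [hst2]
        rw [if_pos hc2, hc2]
        have hcond2 := (stairF_right_iff (n := n) (μ := μ) (ν := ν) (t+1)).mp hc2
        rcases stairF_step (n := n) (μ := μ) (ν := ν) t with hst1 | hst1
        · have hc1 : (stairF n μ ν (t+1)).1 = (stairF n μ ν t).1 + 1 := by rw [hst1]
          rw [if_pos hc1]
          exact hμa _
        · have hc1 : (stairF n μ ν (t+1)).1 = (stairF n μ ν t).1 := by rw [hst1]
          rw [if_neg (by omega)]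
          have hnc := (stairF_right_iff (n := n) (μ := μ) (ν := ν) t).not.mp (by omega)
          push_neg at hnc
          have hfn : (stairF n μ ν t).1 < n := by omega
          obtain ⟨-, hlt⟩ := hnc hfn
          have hv2 : (stairF n μ ν (t+1)).2 = (stairF n μ ν t).2 + 1 := by rw [hst1]
          rw [hv2, hc1]
          exact le_of_lt hlt
      · -- step t+2 goes up
        have hc2 : (stairF n μ ν (t+1+1)).1 = (stairF n μ ν (t+1)).1 := by rw [hst2]
        have hv2 : (stairF n μ ν (t+1+1)).2 = (stairF n μ ν (t+1)).2 + 1 := by rw [hst2]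
        rw [if_neg (by omega), hv2]
        rcases stairF_step (n := n) (μ := μ) (ν := ν) t with hst1 | hst1
        · have hc1 : (stairF n μ ν (t+1)).1 = (stairF n μ ν t).1 + 1 := by rw [hst1]
          rw [if_pos hc1, hc1]
          have hcond1 := (stairF_right_iff (n := n) (μ := μ) (ν := ν) t).mp hc1
          have hb := (stairF_bounds (μ := μ) (ν := ν) hn (t+1+1) h2).2
          rw [hv2] at hb
          have hv1 : (stairF n μ ν (t+1)).2 = (stairF n μ ν t).2 := by rw [hst1]
          rw [hv1]
          rcases hcond1.2 with hcn | hle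
          · omega
          · exact hle
        · have hc1 : (stairF n μ ν (t+1)).1 = (stairF n μ ν t).1 := by rw [hst1]
          rw [if_neg (by omega)]
          exact hνa _
    · rw [stairTh_succ (t+1), if_neg h2]
      exact stairTh_nonneg hμ0 hν0 _

include hμ0 hν0 hμa hνa hμ1 hν1 in
lemma stairTh_antitone' (hn : 0 < n) {t t' : ℕ} (h : t ≤ t') :
    stairTh n μ ν t' ≤ stairTh n μ ν t := by
  induction t' with
  | zero =>
    have ht0 : t = 0 := by omega
    rw [ht0]
  | succ t' ih =>
    rcases Nat.lt_or_ge t (t'+1) with h' | h'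
    · exact le_trans (stairTh_antitone hμ0 hν0 hμa hνa hμ1 hν1 hn t') (ih (by omega))
    · have : t = t'+1 := by omega
      rw [this]

lemma stairTh_top : stairTh n μ ν (2*n+1) = 0 := by
  rw [stairTh_succ, if_neg (by omega)]

lemma claimB1 (G : ℕ → ℝ) : ∀ T, T ≤ 2*n →
    ∑ t ∈ Finset.range T,
        stairTh n μ ν (t+1) * (G ((stairF n μ ν (t+1)).1) - G ((stairF n μ ν t).1))
      = ∑ i ∈ Finset.range ((stairF n μ ν T).1), μ (i+1) * (G (i+1) - G i) := by
  intro T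
  induction T with
  | zero =>
    intro _
    have : (stairF n μ ν 0).1 = 0 := rfl
    rw [this]
    simp
  | succ T ih =>
    intro hT
    rw [Finset.sum_range_succ, ih (by omega)]
    rcases stairF_step (n := n) (μ := μ) (ν := ν) T with hst | hst
    · have hc : (stairF n μ ν (T+1)).1 = (stairF n μ ν T).1 + 1 := by rw [hst]
      have hΘ : stairTh n μ ν (T+1) = μ ((stairF n μ ν (T+1)).1) := by
        rw [stairTh_succ, if_pos hT, if_pos hc]
      rw [hΘ, hc, Finset.sum_range_succ]
    · have hc : (stairF n μ ν (T+1)).1 = (stairF n μ ν T).1 := by rw [hst]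
      rw [hc, sub_self, mul_zero, add_zero]

lemma claimB2 (G : ℕ → ℝ) : ∀ T, T ≤ 2*n →
    ∑ t ∈ Finset.range T,
        stairTh n μ ν (t+1) * (G ((stairF n μ ν (t+1)).2) - G ((stairF n μ ν t).2))
      = ∑ j ∈ Finset.range ((stairF n μ ν T).2), ν (j+1) * (G (j+1) - G j) := by
  intro T
  induction T with
  | zero =>
    intro _
    have : (stairF n μ ν 0).2 = 0 := rfl
    rw [this]
    simp
  | succ T ih =>
    intro hT
    rw [Finset.sum_range_succ, ih (by omega)]
    rcases stairF_step (n := n) (μ := μ) (ν := ν) T with hst | hst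
    · have hc : (stairF n μ ν (T+1)).2 = (stairF n μ ν T).2 := by rw [hst]
      rw [hc, sub_self, mul_zero, add_zero]
    · have hc1 : (stairF n μ ν (T+1)).1 = (stairF n μ ν T).1 := by rw [hst]
      have hc : (stairF n μ ν (T+1)).2 = (stairF n μ ν T).2 + 1 := by rw [hst]
      have hΘ : stairTh n μ ν (T+1) = ν ((stairF n μ ν (T+1)).2) := by
        rw [stairTh_succ, if_pos hT, if_neg (by omega)]
      rw [hΘ, hc, Finset.sum_range_succ]

end Theta
section Weights

open Finset

noncomputable def wSuf (n : ℕ) (w : Fin (n+1) → ℝ) : ℕ → ℝ :=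
  fun i => ∑ j : Fin (n+1), if i ≤ j.val then w j else 0

variable {n : ℕ} {w : Fin (n+1) → ℝ}

lemma wSuf_nonneg (hw0 : ∀ j, 0 ≤ w j) (i : ℕ) : 0 ≤ wSuf n w i := by
  refine Finset.sum_nonneg fun j _ => ?_
  split <;> [exact hw0 j; exact le_refl 0]

lemma wSuf_antitone (hw0 : ∀ j, 0 ≤ w j) (i : ℕ) : wSuf n w (i+1) ≤ wSuf n w i := by
  refine Finset.sum_le_sum fun j _ => ?_
  by_cases h : i+1 ≤ j.val
  · rw [if_pos h, if_pos (by omega)]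
  · rw [if_neg h]
    split <;> [exact hw0 j; exact le_refl 0]

lemma wSuf_le_one (hw0 : ∀ j, 0 ≤ w j) (hw1 : ∑ j, w j = 1) (i : ℕ) : wSuf n w i ≤ 1 := by
  rw [← hw1]
  refine Finset.sum_le_sum fun j _ => ?_
  split <;> [exact le_refl _; exact hw0 j]

lemma claimC (A : ℕ → ℝ) (c : ℕ → ℝ) {K : ℕ} (hK : K ≤ n) :
    ∑ i ∈ range n, c (i+1) * (A (min (i+1) K) - A (min i K))
      = ∑ i ∈ range K, c (i+1) * (A (i+1) - A i) := by
  rw [Finset.range_eq_Ico, ← Finset.sum_Ico_consecutive _ (Nat.zero_le K) hK]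
  have h2 : ∑ i ∈ Ico K n, c (i+1) * (A (min (i+1) K) - A (min i K)) = 0 := by
    refine Finset.sum_eq_zero fun i hi => ?_
    have hi' := Finset.mem_Ico.mp hi
    rw [Nat.min_eq_right (by omega), Nat.min_eq_right (by omega), sub_self, mul_zero]
  rw [h2, add_zero, ← Finset.range_eq_Ico]
  refine Finset.sum_congr rfl fun i hi => ?_
  have hi' := Finset.mem_range.mp hi
  rw [Nat.min_eq_left (by omega), Nat.min_eq_left (by omega)]

lemma range_filter_lt (K m : ℕ) :
    (range K).filter (fun i => i + 1 ≤ m) = range (min m K) := by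
  ext i
  simp only [Finset.mem_filter, Finset.mem_range, Nat.lt_min]
  omega

lemma claimD (hw1 : ∑ j, w j = 1) (A : ℕ → ℝ) {K : ℕ} :
    ∑ j : Fin (n+1), w j * A (min j.val K)
      = A 0 + ∑ i ∈ range K, wSuf n w (i+1) * (A (i+1) - A i) := by
  classical
  have h1 : ∑ i ∈ range K, wSuf n w (i+1) * (A (i+1) - A i)
      = ∑ i ∈ range K, ∑ j : Fin (n+1), (if i+1 ≤ j.val then w j * (A (i+1) - A i) else 0) := by
    refine Finset.sum_congr rfl fun i _ => ?_
    rw [wSuf, Finset.sum_mul]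
    refine Finset.sum_congr rfl fun j _ => ?_
    split <;> simp
  rw [h1, Finset.sum_comm]
  have h2 : ∀ j : Fin (n+1),
      ∑ i ∈ range K, (if i+1 ≤ j.val then w j * (A (i+1) - A i) else 0)
        = w j * (A (min j.val K) - A 0) := by
    intro j
    rw [← Finset.sum_filter, range_filter_lt K j.val, ← Finset.mul_sum,
      Finset.sum_range_sub (fun m => A m) (min j.val K)]
  rw [Finset.sum_congr rfl (fun j _ => h2 j)]
  have h3 : ∑ j : Fin (n+1), w j * (A (min j.val K) - A 0)
      = (∑ j : Fin (n+1), w j * A (min j.val K)) - (∑ j : Fin (n+1), w j) * A 0 := by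
    rw [Finset.sum_mul, ← Finset.sum_sub_distrib]
    refine Finset.sum_congr rfl fun j _ => ?_
    ring
  rw [h3, hw1]
  ring

/-- The first-component identity for the constructed staircase. -/
lemma cover_fst {u : Fin (n+1) → ℝ}
    (hn : 0 < n) (hw1 : ∑ j, w j = 1) (A : ℕ → ℝ) {K : ℕ} (hK : K ≤ n) :
    ∑ t ∈ range (2*n+1),
        (stairTh n (wSuf n w) (wSuf n u) t - stairTh n (wSuf n w) (wSuf n u) (t+1)) *
          A (min (stairF n (wSuf n w) (wSuf n u) t).1 K)
      = ∑ j : Fin (n+1), w j * A (min j.val K) := by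
  set μ := wSuf n w
  set ν := wSuf n u
  rw [abel_sum (stairTh n μ ν) (fun t => A (min (stairF n μ ν t).1 K)) (2*n)]
  rw [claimB1 (G := fun m => A (min m K)) (2*n) (le_refl _)]
  have hl : (stairF n μ ν (2*n)).1 = n := by rw [stairF_last hn]
  rw [hl, claimC A (fun i => μ i) hK, stairTh_top, stairTh_zero]
  have h0 : (stairF n μ ν 0).1 = 0 := rfl
  rw [h0, claimD hw1 A]
  simp
  rfl

/-- The second-component identity for the constructed staircase. -/
lemma cover_snd {u : Fin (n+1) → ℝ}
    (hn : 0 < n) (hu1 : ∑ j, u j = 1) (A : ℕ → ℝ) {K : ℕ} (hK : K ≤ n) :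
    ∑ t ∈ range (2*n+1),
        (stairTh n (wSuf n w) (wSuf n u) t - stairTh n (wSuf n w) (wSuf n u) (t+1)) *
          A (min (stairF n (wSuf n w) (wSuf n u) t).2 K)
      = ∑ j : Fin (n+1), u j * A (min j.val K) := by
  set μ := wSuf n w
  set ν := wSuf n u
  rw [abel_sum (stairTh n μ ν) (fun t => A (min (stairF n μ ν t).2 K)) (2*n)]
  rw [claimB2 (G := fun m => A (min m K)) (2*n) (le_refl _)]
  have hl : (stairF n μ ν (2*n)).2 = n := by rw [stairF_last hn]
  rw [hl, claimC A (fun i => ν i) hK, stairTh_top, stairTh_zero]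
  have h0 : (stairF n μ ν 0).2 = 0 := rfl
  rw [h0, claimD hu1 A]
  simp
  rfl

end Weights

theorem stmt11 {n : ℕ} (hn : 0 < n) (a₁ a₂ : Fin (n+1) → ℝ)
    (ha₁ : StrictMono a₁) (ha₂ : StrictMono a₂)
    (v₁ v₂ : Fin (n+1) → Fin (n+1) → ℝ)
    (hv₁ : ∀ j k, v₁ j k = min (a₁ k) (a₁ j))
    (hv₂ : ∀ j k, v₂ j k = min (a₂ k) (a₂ j))
    (Q₁ Q₂ : Set (Fin (n+1) → ℝ))
    (hQ₁ : Q₁ = convexHull ℝ (Set.range v₁))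
    (hQ₂ : Q₂ = convexHull ℝ (Set.range v₂))
    (Q : Set ((Fin (n+1) → ℝ) × (Fin (n+1) → ℝ)))
    (hQ : Q = {s | s.1 ∈ Q₁ ∧ s.2 ∈ Q₂})
    (g : (Fin (n+1) → ℝ) × (Fin (n+1) → ℝ) → ℝ)
    (hg : ∀ s, g s = s.1 (Fin.last n) * s.2 (Fin.last n)) :
    ∀ s ∈ Q,
      -- the concave envelope (pointwise infimum of affine majorants of g on Q) at s
      sInf {y | ∃ c : ((Fin (n+1) → ℝ) × (Fin (n+1) → ℝ)) →ᵃ[ℝ] ℝ,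
          (∀ q ∈ Q, g q ≤ c q) ∧ y = c s}
        = sInf {y | ∃ p : Fin (2*n+1) → ℕ × ℕ, IsStaircase n p ∧ y = stairVal n a₁ a₂ p s} := by
  classical
  intro s hs
  set S₁ : Set ℝ := {y | ∃ c : Espc n →ᵃ[ℝ] ℝ, (∀ q ∈ Q, g q ≤ c q) ∧ y = c s} with hS₁
  set S₂ : Set ℝ :=
    {y | ∃ p : Fin (2*n+1) → ℕ × ℕ, IsStaircase n p ∧ y = stairVal n a₁ a₂ p s} with hS₂
  -- vertex pairs lie in Q
  have hvtxQ : ∀ (I J : ℕ), ((v₁ (idx n I), v₂ (idx n J)) : Espc n) ∈ Q := by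
    intro I J
    rw [hQ]
    exact ⟨by rw [hQ₁]; exact subset_convexHull ℝ _ (Set.mem_range_self _),
      by rw [hQ₂]; exact subset_convexHull ℝ _ (Set.mem_range_self _)⟩
  -- each staircase's affine interpolant majorizes g on Q
  have maj : ∀ p, IsStaircase n p → ∀ q ∈ Q, g q ≤ stairAff n a₁ a₂ p q := by
    intro p hp q hq
    rw [hQ] at hq
    obtain ⟨hq1, hq2⟩ := hq
    rw [hQ₁] at hq1
    rw [hQ₂] at hq2
    obtain ⟨w, hw0, hw1, hwrep⟩ := hull_rep ha₁ hv₁ hq1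
    obtain ⟨u, hu0, hu1, hurep⟩ := hull_rep ha₂ hv₂ hq2
    have hq_eq1 : q = ∑ j : Fin (n+1), w j • ((v₁ j, q.2) : Espc n) := by
      refine Prod.ext_iff.mpr ⟨?_, ?_⟩
      · rw [Prod.fst_sum]
        simpa using hwrep
      · rw [Prod.snd_sum]
        simp only [Prod.smul_snd]
        rw [← Finset.sum_smul, hw1, one_smul]
    have hq_eq2 : ∀ j : Fin (n+1),
        ((v₁ j, q.2) : Espc n) = ∑ k : Fin (n+1), u k • ((v₁ j, v₂ k) : Espc n) := by
      intro j
      refine Prod.ext_iff.mpr ⟨?_, ?_⟩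
      · rw [Prod.fst_sum]
        simp only [Prod.smul_fst]
        rw [← Finset.sum_smul, hu1, one_smul]
      · rw [Prod.snd_sum]
        simpa using hurep
    have hgq : g q = ∑ j : Fin (n+1), ∑ k : Fin (n+1),
        w j * (u k * (a₁ j * a₂ k)) := by
      rw [hg]
      have h1 : q.1 (Fin.last n) = ∑ j : Fin (n+1), w j * a₁ j := by
        conv_lhs => rw [hwrep]
        rw [Finset.sum_apply]
        refine Finset.sum_congr rfl fun j _ => ?_
        rw [Pi.smul_apply, smul_eq_mul, v_last ha₁.monotone hv₁]
      have h2 : q.2 (Fin.last n) = ∑ k : Fin (n+1), u k * a₂ k := by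
        conv_lhs => rw [hurep]
        rw [Finset.sum_apply]
        refine Finset.sum_congr rfl fun k _ => ?_
        rw [Pi.smul_apply, smul_eq_mul, v_last ha₂.monotone hv₂]
      rw [h1, h2, Finset.sum_mul_sum]
      refine Finset.sum_congr rfl fun j _ => Finset.sum_congr rfl fun k _ => by ring
    have hcq : stairAff n a₁ a₂ p q = ∑ j : Fin (n+1), ∑ k : Fin (n+1),
        w j * (u k * stairAff n a₁ a₂ p (v₁ j, v₂ k)) := by
      conv_lhs => rw [hq_eq1]
      rw [aff_comb _ _ _ _ hw1]
      refine Finset.sum_congr rfl fun j _ => ?_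
      conv_lhs => rw [hq_eq2 j]
      rw [aff_comb _ _ _ _ hu1, Finset.mul_sum]
    rw [hgq, hcq]
    refine Finset.sum_le_sum fun j _ => Finset.sum_le_sum fun k _ => ?_
    have hstar := star_le hv₁ hv₂ ha₁.monotone ha₂.monotone hp j.val k.val
      (by omega) (by omega)
    rw [idx_self j, idx_self k] at hstar
    have : a₁ j * a₂ k ≤ stairAff n a₁ a₂ p (v₁ j, v₂ k) := hstar
    have huk := hu0 k
    have hwj := hw0 j
    nlinarith [this, huk, hwj, mul_le_mul_of_nonneg_left this huk]
  -- S₂ ⊆ S₁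
  have hsub : S₂ ⊆ S₁ := by
    rintro y ⟨p, hp, rfl⟩
    exact ⟨stairAff n a₁ a₂ p, maj p hp, rfl⟩
  have hbdd : BddBelow S₁ := by
    refine ⟨g s, ?_⟩
    rintro y ⟨c, hc, rfl⟩
    exact hc s hs
  have hne₂ : S₂.Nonempty := by
    refine ⟨_, ⟨stairP n (fun _ => 0) (fun _ => 0), stairP_isStaircase hn, rfl⟩⟩
  have hne₁ : S₁.Nonempty := hne₂.mono hsub
  refine le_antisymm (csInf_le_csInf hbdd hne₂ hsub) ?_
  refine le_csInf hne₁ ?_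
  rintro y ⟨c, hc, rfl⟩
  -- construct the staircase containing s
  have hs' := hs
  rw [hQ] at hs'
  obtain ⟨hs1, hs2⟩ := hs'
  rw [hQ₁] at hs1
  rw [hQ₂] at hs2
  obtain ⟨w, hw0, hw1, hwrep⟩ := hull_rep ha₁ hv₁ hs1
  obtain ⟨u, hu0, hu1, hurep⟩ := hull_rep ha₂ hv₂ hs2
  set μ := wSuf n w with hμ
  set ν := wSuf n u with hν
  have hμ0 := wSuf_nonneg hw0
  have hν0 := wSuf_nonneg hu0
  have hμa := wSuf_antitone hw0
  have hνa := wSuf_antitone hu0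
  have hμ1 := wSuf_le_one hw0 hw1 1
  have hν1 := wSuf_le_one hu0 hu1 1
  set p := stairP n μ ν with hpdef
  have hp : IsStaircase n p := stairP_isStaircase hn
  set lam : ℕ → ℝ := fun t => stairTh n μ ν t - stairTh n μ ν (t+1) with hlam
  set V : ℕ → Espc n :=
    fun t => (v₁ (idx n (stairF n μ ν t).1), v₂ (idx n (stairF n μ ν t).2)) with hV
  have hlam0 : ∀ t, 0 ≤ lam t := by
    intro t
    have := stairTh_antitone hμ0 hν0 hμa hνa hμ1 hν1 hn t
    simp only [hlam]
    linarith
  have hlam1 : ∑ t ∈ Finset.range (2*n+1), lam t = 1 := by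
    simp only [hlam]
    rw [Finset.sum_range_sub' (stairTh n μ ν) (2*n+1)]
    rw [stairTh_zero, stairTh_top]
    ring
  -- s is the convex combination of the staircase vertices
  have hrep : s = ∑ t ∈ Finset.range (2*n+1), lam t • V t := by
    refine Prod.ext_iff.mpr ⟨?_, ?_⟩
    · rw [Prod.fst_sum]
      simp only [hV, Prod.smul_fst]
      funext K
      rw [Finset.sum_apply]
      simp only [Pi.smul_apply, smul_eq_mul]
      have hv : ∀ t, v₁ (idx n (stairF n μ ν t).1) K
          = a₁ (idx n (min (stairF n μ ν t).1 K.val)) :=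
        fun t => v_apply ha₁.monotone hv₁ _ K
      calc s.1 K = ∑ j : Fin (n+1), w j * a₁ (idx n (min j.val K.val)) := by
            conv_lhs => rw [hwrep]
            rw [Finset.sum_apply]
            refine Finset.sum_congr rfl fun j _ => ?_
            rw [Pi.smul_apply, smul_eq_mul]
            congr 1
            rw [← idx_self j, v_apply ha₁.monotone hv₁ j.val K, idx_self j]
        _ = ∑ t ∈ Finset.range (2*n+1),
              lam t * a₁ (idx n (min (stairF n μ ν t).1 K.val)) := by
            rw [← cover_fst hn hw1 (fun m => a₁ (idx n m)) (K := K.val) (by omega)]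
        _ = ∑ t ∈ Finset.range (2*n+1), lam t * v₁ (idx n (stairF n μ ν t).1) K := by
            refine Finset.sum_congr rfl fun t _ => ?_
            rw [hv t]
    · rw [Prod.snd_sum]
      simp only [hV, Prod.smul_snd]
      funext K
      rw [Finset.sum_apply]
      simp only [Pi.smul_apply, smul_eq_mul]
      have hv : ∀ t, v₂ (idx n (stairF n μ ν t).2) K
          = a₂ (idx n (min (stairF n μ ν t).2 K.val)) :=
        fun t => v_apply ha₂.monotone hv₂ _ K
      calc s.2 K = ∑ j : Fin (n+1), u j * a₂ (idx n (min j.val K.val)) := by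
            conv_lhs => rw [hurep]
            rw [Finset.sum_apply]
            refine Finset.sum_congr rfl fun j _ => ?_
            rw [Pi.smul_apply, smul_eq_mul]
            congr 1
            rw [← idx_self j, v_apply ha₂.monotone hv₂ j.val K, idx_self j]
        _ = ∑ t ∈ Finset.range (2*n+1),
              lam t * a₂ (idx n (min (stairF n μ ν t).2 K.val)) := by
            rw [← cover_snd hn hu1 (fun m => a₂ (idx n m)) (K := K.val) (by omega)]
        _ = ∑ t ∈ Finset.range (2*n+1), lam t * v₂ (idx n (stairF n μ ν t).2) K := by
            refine Finset.sum_congr rfl fun t _ => ?_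
            rw [hv t]
  -- the value of the interpolant at s
  have hval : stairVal n a₁ a₂ p s
      = ∑ t ∈ Finset.range (2*n+1),
          lam t * (a₁ (idx n (stairF n μ ν t).1) * a₂ (idx n (stairF n μ ν t).2)) := by
    rw [← stairAff_apply]
    conv_lhs => rw [hrep]
    rw [aff_comb _ _ _ _ hlam1]
    refine Finset.sum_congr rfl fun t ht => ?_
    have ht' : t ≤ 2*n := by
      have := Finset.mem_range.mp ht; omega
    congr 1
    have hIJ : pathPt n p t = ((stairF n μ ν t).1, (stairF n μ ν t).2) := by
      rw [hpdef, pathPt_stairP t ht']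
    exact star_eq hv₁ hv₂ ha₁.monotone ha₂.monotone hp t ht' _ _ hIJ
  have hcs : stairVal n a₁ a₂ p s ≤ c s := by
    rw [hval]
    have hcs2 : c s = ∑ t ∈ Finset.range (2*n+1), lam t * c (V t) := by
      conv_lhs => rw [hrep]
      exact aff_comb c _ lam V hlam1
    rw [hcs2]
    refine Finset.sum_le_sum fun t _ => ?_
    refine mul_le_mul_of_nonneg_left ?_ (hlam0 t)
    have hgV : g (V t) = a₁ (idx n (stairF n μ ν t).1) * a₂ (idx n (stairF n μ ν t).2) := by
      rw [hg]
      simp only [hV]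
      rw [v_last ha₁.monotone hv₁, v_last ha₂.monotone hv₂]
    calc a₁ (idx n (stairF n μ ν t).1) * a₂ (idx n (stairF n μ ν t).2)
        = g (V t) := hgV.symm
      _ ≤ c (V t) := hc (V t) (by simp only [hV]; exact hvtxQ _ _)
  calc sInf S₂ ≤ stairVal n a₁ a₂ p s := csInf_le (hbdd.mono hsub) ⟨p, hp, rfl⟩
    _ ≤ c s := hcs
end

section
/- Let C ⊆ R^p be a polytope that is the convex hull of a finite set V, and let S ⊆ C with V ⊆ S and conv(S) = C. For a function h : S → R, let H = {(y,μ) : y ∈ S, μ ≤ h(y)} and suppose h is bounded above on S. Consider the polyhedron R = {(y,μ) : y ∈ C, μ ≤ ĥ(y)} where ĥ is the concave envelope of h over C. If ĥ is determined by the values of h on V (concave-extendability from V), then every extreme point (y*, μ*) of R with μ* = ĥ(y*) satisfies y* ∈ V. -/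
theorem stmt13 {p : ℕ} (V : Finset (Fin p → ℝ)) (S C : Set (Fin p → ℝ))
    (hC : C = convexHull ℝ (V : Set (Fin p → ℝ)))
    (hVS : (V : Set (Fin p → ℝ)) ⊆ S) (hSC : S ⊆ C)
    (hconvS : convexHull ℝ S = C)
    (h : (Fin p → ℝ) → ℝ) (hbdd : BddAbove (h '' S))
    (env : (Fin p → ℝ) → ℝ)
    -- env is the concave envelope of h over C …
    (henv1 : ConcaveOn ℝ C env)
    (henv2 : ∀ y ∈ S, h y ≤ env y)
    (henv3 : ∀ g : (Fin p → ℝ) → ℝ, ConcaveOn ℝ C g → (∀ y ∈ S, h y ≤ g y) →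
      ∀ y ∈ C, env y ≤ g y)
    -- … and env is determined by the values of h on V (concave-extendability from V)
    (hextend : ∀ g : (Fin p → ℝ) → ℝ, ConcaveOn ℝ C g →
      (∀ y ∈ (V : Set (Fin p → ℝ)), h y ≤ g y) → ∀ y ∈ C, env y ≤ g y)
    (R : Set ((Fin p → ℝ) × ℝ)) (hR : R = {q | q.1 ∈ C ∧ q.2 ≤ env q.1}) :
    ∀ q ∈ Set.extremePoints ℝ R, q.2 = env q.1 → q.1 ∈ (V : Set (Fin p → ℝ)) := by
  classical
  -- The finite set of "graph" points over the vertices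
  set f : (Fin p → ℝ) → (Fin p → ℝ) × ℝ := fun v => (v, env v) with hf
  set Fv : Finset ((Fin p → ℝ) × ℝ) := V.image f with hFv
  set K : Set ((Fin p → ℝ) × ℝ) := convexHull ℝ (Fv : Set ((Fin p → ℝ) × ℝ)) with hK
  have hFsub : (Fv : Set ((Fin p → ℝ) × ℝ)) ⊆ K := subset_convexHull ℝ _
  have hKcompact : IsCompact K := (Fv.finite_toSet).isCompact_convexHull (𝕜 := ℝ)
  have hKconvex : Convex ℝ K := convex_convexHull ℝ _
  -- every point of K lies on or below the graph of env, with first coord in C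
  have hVC : (V : Set (Fin p → ℝ)) ⊆ C := hSC.trans' hVS
  have hKbelow : ∀ q ∈ K, q.1 ∈ C ∧ q.2 ≤ env q.1 := by
    intro q hq
    rw [hK, Finset.convexHull_eq] at hq
    obtain ⟨w, hw0, hw1, hwq⟩ := hq
    rw [Finset.centerMass, hw1, inv_one, one_smul] at hwq
    have h1 : q.1 = ∑ y ∈ Fv, w y • y.1 := by
      rw [← hwq]; simp [Prod.fst_sum]
    have h2 : q.2 = ∑ y ∈ Fv, w y • y.2 := by
      rw [← hwq]; simp [Prod.snd_sum]
    have hmemC : ∀ y ∈ Fv, y.1 ∈ C := by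
      intro y hy
      rw [hFv, Finset.mem_image] at hy
      obtain ⟨v, hv, rfl⟩ := hy
      exact hVC hv
    have hq1C : q.1 ∈ C := by
      rw [h1]
      exact Convex.sum_mem (hC ▸ convex_convexHull ℝ _) hw0 hw1 fun y hy => hmemC y hy
    refine ⟨hq1C, ?_⟩
    have hy2 : ∀ y ∈ Fv, y.2 = env y.1 := by
      intro y hy
      rw [hFv, Finset.mem_image] at hy
      obtain ⟨v, hv, rfl⟩ := hy
      rfl
    have := henv1.le_map_sum (t := Fv) (w := w) (p := Prod.fst) hw0 hw1 hmemC
    rw [h2, ← h1] at *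
    calc ∑ y ∈ Fv, w y • y.2 = ∑ y ∈ Fv, w y • env y.1 := by
          exact Finset.sum_congr rfl fun y hy => by rw [hy2 y hy]
      _ ≤ env q.1 := by rw [h1]; exact this
  -- K is contained in R
  have hKR : K ⊆ R := by
    rw [hK, hR]
    refine convexHull_min ?_ henv1.convex_hypograph
    intro q hq
    rw [Finset.mem_coe, hFv, Finset.mem_image] at hq
    obtain ⟨v, hv, rfl⟩ := hq
    exact ⟨hVC hv, le_refl _⟩
  -- the vertical slices of K
  set T : (Fin p → ℝ) → Set ℝ := fun x => {t | (x, t) ∈ K} with hT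
  have hTclosed : ∀ x, IsClosed (T x) := by
    intro x
    exact IsClosed.preimage (Continuous.prodMk_right x) hKcompact.isClosed
  have hTbdd : ∀ x, BddAbove (T x) := by
    intro x
    refine BddAbove.mono ?_ (hKcompact.image continuous_snd).bddAbove
    intro t ht
    exact ⟨(x, t), ht, rfl⟩
  have hTne : ∀ x ∈ C, (T x).Nonempty := by
    intro x hx
    have himg : Prod.fst '' K = C := by
      have h0 : Prod.fst '' K = ⇑(LinearMap.fst ℝ (Fin p → ℝ) ℝ) '' K := rfl
      rw [h0, hK, (LinearMap.fst ℝ (Fin p → ℝ) ℝ).image_convexHull, hC]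
      congr 1
      ext v
      simp [hFv, hf]
    rw [← himg] at hx
    obtain ⟨⟨y, t⟩, hyt, hy⟩ := hx
    refine ⟨t, ?_⟩
    have h1 : ((y, t).1, t) ∈ K := hyt
    rw [hy] at h1
    exact h1
  -- the upper concave function g
  set g : (Fin p → ℝ) → ℝ := fun x => sSup (T x) with hg
  have hgmem : ∀ x ∈ C, (x, g x) ∈ K := by
    intro x hx
    exact (hTclosed x).csSup_mem (hTne x hx) (hTbdd x)
  have hgconc : ConcaveOn ℝ C g := by
    refine ⟨hC ▸ convex_convexHull ℝ _, ?_⟩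
    intro x hx y hy a b ha hb hab
    have hmix : (a • x + b • y, a * g x + b * g y) ∈ K := by
      have := hKconvex (hgmem x hx) (hgmem y hy) ha hb hab
      simpa [Prod.smul_mk, smul_eq_mul] using this
    have : a * g x + b * g y ∈ T (a • x + b • y) := hmix
    simpa [smul_eq_mul] using le_csSup (hTbdd _) this
  have henvle : ∀ x ∈ C, env x ≤ g x := by
    refine hextend g hgconc ?_
    intro v hv
    refine (henv2 v (hVS hv)).trans ?_
    have : (v, env v) ∈ K := hFsub (by
      rw [Finset.mem_coe, hFv, Finset.mem_image]; exact ⟨v, hv, rfl⟩)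
    exact le_csSup (hTbdd v) this
  -- main argument
  intro q hq hq2
  have hqR : q ∈ R := hq.1
  have hq1C : q.1 ∈ C := by rw [hR] at hqR; exact hqR.1
  have hgK : (q.1, g q.1) ∈ K := hgmem q.1 hq1C
  have hgle : g q.1 ≤ env q.1 := (hKbelow _ hgK).2
  have hge : env q.1 = g q.1 := le_antisymm (henvle q.1 hq1C) hgle
  have hqK : q ∈ K := by
    have : q = (q.1, g q.1) := by
      rw [← hge, ← hq2]
    rw [this]; exact hgK
  have hqext : q ∈ Set.extremePoints ℝ K :=
    inter_extremePoints_subset_extremePoints_of_subset hKR ⟨hqK, hq⟩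
  have hqF : q ∈ (Fv : Set ((Fin p → ℝ) × ℝ)) := extremePoints_convexHull_subset hqext
  rw [Finset.mem_coe, hFv, Finset.mem_image] at hqF
  obtain ⟨v, hv, hvq⟩ := hqF
  rw [← hvq]
  exact hv
end

section
/- Let Δ = {z ∈ R^{n+1} : 1 = z_0 ≥ z_1 ≥ ⋯ ≥ z_n ≥ 0} and fix a subsequence of indices 0 = τ(0) < τ(1) < ⋯ < τ(l) = n. Define the mixed-integer set E = {(z,δ) : z ∈ Δ, δ ∈ {0,1}^{l−1}, z_{τ(t)} ≥ δ_t ≥ z_{τ(t)+1} for t = 1,…,l−1}. Then the projection of E onto z equals the union over t = 1,…,l of the faces Δ_t = {z ∈ Δ : z_j = 1 for j ≤ τ(t−1), z_j = 0 for j > τ(t)}. -/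
theorem stmt14 {n L : ℕ}
    (Δ : Set (Fin (n+1) → ℝ))
    (hΔ : Δ = {z | z 0 = 1 ∧ Antitone z ∧ 0 ≤ z (Fin.last n)})
    (τ : Fin (L+2) → Fin (n+1))
    (hτ : StrictMono τ) (hτ0 : τ 0 = 0) (hτl : τ (Fin.last (L+1)) = Fin.last n) :
    {z | ∃ δ : Fin L → ℝ, (∀ t, δ t = 0 ∨ δ t = 1) ∧ z ∈ Δ ∧
        ∀ t : Fin L, δ t ≤ z (τ t.succ.castSucc) ∧ z (τ t.succ.castSucc + 1) ≤ δ t} =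
      ⋃ t : Fin (L+1),
        {z ∈ Δ | (∀ j, j ≤ τ t.castSucc → z j = 1) ∧ ∀ j, τ t.succ < j → z j = 0} := by
  classical
  subst hΔ
  have hτlt : ∀ t : Fin L, τ t.succ.castSucc < Fin.last n := by
    intro t
    rw [← hτl]
    apply hτ
    simp [Fin.lt_def]
  ext z
  simp only [Set.mem_setOf_eq, Set.mem_iUnion]
  constructor
  · rintro ⟨δ, hbin, hz, hcon⟩
    have zle1 : ∀ j, z j ≤ 1 := fun j =>
      (hz.2.1 (Fin.zero_le j)).trans (le_of_eq hz.1)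
    have zge0 : ∀ j, 0 ≤ z j := fun j =>
      hz.2.2.trans (hz.2.1 (Fin.le_last j))
    have hone : ∀ m : Fin (L+2), z (τ m) = 1 → ∀ j, j ≤ τ m → z j = 1 := by
      intro m hm j hj
      exact le_antisymm (zle1 j) (hm ▸ hz.2.1 hj)
    have honeAt : ∀ t : Fin (L+1),
        (t.val = 0 ∨ ∃ hs : t.val - 1 < L, 0 < t.val ∧ δ ⟨t.val - 1, hs⟩ = 1) →
        ∀ j, j ≤ τ t.castSucc → z j = 1 := by
      intro t ht
      apply hone
      rcases ht with h0 | ⟨hs, hpos, hd⟩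
      · have : t.castSucc = 0 := by
          apply Fin.ext; simpa using h0
        rw [this, hτ0, hz.1]
      · have hc := (hcon ⟨t.val - 1, hs⟩).1
        have heq : (⟨t.val - 1, hs⟩ : Fin L).succ.castSucc = t.castSucc := by
          apply Fin.ext; simp; omega
        rw [heq, hd] at hc
        exact le_antisymm (zle1 _) hc
    have hzeroAt : ∀ s : Fin L, δ s = 0 → ∀ j, τ s.succ.castSucc < j → z j = 0 := by
      intro s hd j hj
      have hc := (hcon s).2
      rw [hd] at hc
      refine le_antisymm (le_trans (hz.2.1 ?_) hc) (zge0 j)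
      rw [Fin.le_def, Fin.val_add_one_of_lt (hτlt s)]
      exact hj
    by_cases hex : ∃ s : Fin L, δ s = 0
    · have hk : ∃ k, ∃ hk : k < L, δ ⟨k, hk⟩ = 0 :=
        ⟨hex.choose.val, hex.choose.isLt, by simpa using hex.choose_spec⟩
      obtain ⟨hkL, hk0⟩ := Nat.find_spec hk
      set k := Nat.find hk with hkdef
      refine ⟨⟨k, by omega⟩, hz, ?_, ?_⟩
      · apply honeAt
        rcases Nat.eq_zero_or_pos k with h0 | hpos
        · exact Or.inl h0
        · refine Or.inr ⟨by omega, by simpa using hpos, ?_⟩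
          rcases hbin ⟨k - 1, by omega⟩ with h | h
          · exact absurd ⟨by omega, h⟩ (Nat.find_min hk (by omega))
          · exact h
      · intro j hj
        apply hzeroAt ⟨k, hkL⟩ hk0
        have heq : (⟨k, by omega⟩ : Fin (L+1)).succ = (⟨k, hkL⟩ : Fin L).succ.castSucc := by
          apply Fin.ext; simp
        rwa [heq] at hj
    · refine ⟨Fin.last L, hz, ?_, ?_⟩
      · apply honeAt
        rcases Nat.eq_zero_or_pos L with h0 | hpos
        · exact Or.inl (by simp [h0])
        · refine Or.inr ⟨by simp; omega, by simpa using hpos, ?_⟩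
          rcases hbin ⟨(Fin.last L).val - 1, by simp; omega⟩ with h | h
          · exact absurd ⟨_, h⟩ hex
          · exact h
      · intro j hj
        exfalso
        rw [Fin.succ_last, hτl] at hj
        exact absurd hj (Fin.not_lt.mpr (Fin.le_last j))
  · rintro ⟨t, hz, h1, h0⟩
    have zle1 : ∀ j, z j ≤ 1 := fun j =>
      (hz.2.1 (Fin.zero_le j)).trans (le_of_eq hz.1)
    have zge0 : ∀ j, 0 ≤ z j := fun j =>
      hz.2.2.trans (hz.2.1 (Fin.le_last j))
    refine ⟨fun s => if s.val < t.val then 1 else 0,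
      fun s => by dsimp; split <;> simp, hz, ?_⟩
    intro s
    dsimp
    split
    case isTrue hst =>
      constructor
      · refine le_of_eq (h1 _ ?_).symm
        apply hτ.monotone
        rw [Fin.le_def]
        simp
        omega
      · exact zle1 _
    case isFalse hst =>
      constructor
      · exact zge0 _
      · refine le_of_eq (h0 _ ?_)
        have hmono : τ t.succ ≤ τ s.succ.castSucc := by
          apply hτ.monotone
          rw [Fin.le_def]
          simp
          omega
        rw [show s.castSucc.succ = s.succ.castSucc from Fin.ext (by simp)]
        rw [Fin.lt_def, Fin.val_add_one_of_lt (hτlt s)]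
        rw [Fin.le_def] at hmono
        omega
end

section
/- Let Δ and the faces Δ_1,…,Δ_l be as in the incremental formulation: Δ = {z ∈ R^{n+1} : 1 = z_0 ≥ ⋯ ≥ z_n ≥ 0}, 0 = τ(0) < ⋯ < τ(l) = n, Δ_t = {z ∈ Δ : z_j = 1 for j ≤ τ(t−1), z_j = 0 for j > τ(t)}. Let R = {(z,δ) ∈ Δ × [0,1]^{l−1} : z_{τ(t)} ≥ δ_t ≥ z_{τ(t)+1} ∀t}. Then every extreme point of R has δ ∈ {0,1}^{l−1}; i.e., the continuous relaxation of the incremental formulation is integral in δ. -/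
private lemma pert15 {a b v ε : ℝ} (hab : a ≤ b) (hε : 0 ≤ ε)
    (ha : a ≠ v → ε ≤ |a - v|) (hb : b ≠ v → ε ≤ |b - v|) :
    a + (if a = v then ε else 0) ≤ b + (if b = v then ε else 0) ∧
    a - (if a = v then ε else 0) ≤ b - (if b = v then ε else 0) := by
  by_cases h1 : a = v <;> by_cases h2 : b = v <;>
    simp only [h1, h2, if_pos, if_neg, if_true, if_false] <;> subst_vars
  · constructor <;> linarith
  · have hb' : ε ≤ |b - v| := hb h2
    have : b - v > 0 := lt_of_le_of_ne (by linarith) (fun h => h2 (by linarith))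
    rw [abs_of_pos this] at hb'
    constructor <;> simp <;> linarith
  · have ha' : ε ≤ |a - v| := ha h1
    have : a - v < 0 := lt_of_le_of_ne (by linarith) (fun h => h1 (by linarith))
    rw [abs_of_neg this] at ha'
    constructor <;> simp <;> linarith
  · constructor <;> linarith

theorem stmt15 {n L : ℕ}
    (Δ : Set (Fin (n+1) → ℝ))
    (hΔ : Δ = {z | z 0 = 1 ∧ Antitone z ∧ 0 ≤ z (Fin.last n)})
    (τ : Fin (L+2) → Fin (n+1))
    (hτ : StrictMono τ) (hτ0 : τ 0 = 0) (hτl : τ (Fin.last (L+1)) = Fin.last n)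
    (R : Set ((Fin (n+1) → ℝ) × (Fin L → ℝ)))
    (hR : R = {q | q.1 ∈ Δ ∧ ∀ t : Fin L, 0 ≤ q.2 t ∧ q.2 t ≤ 1 ∧
        q.2 t ≤ q.1 (τ t.succ.castSucc) ∧ q.1 (τ t.succ.castSucc + 1) ≤ q.2 t}) :
    ∀ q ∈ Set.extremePoints ℝ R, ∀ t : Fin L, q.2 t = 0 ∨ q.2 t = 1 := by
  subst hΔ hR
  rintro q hq t
  by_contra hcon
  push_neg at hcon
  obtain ⟨hqt0, hqt1⟩ := hcon
  rw [mem_extremePoints] at hq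
  obtain ⟨hqR, hqext⟩ := hq
  obtain ⟨⟨hz0, hzanti, hzn⟩, hδ⟩ := hqR
  set z := q.1 with hz
  set δ := q.2 with hδdef
  set v : ℝ := δ t with hvdef
  have hv0 : 0 < v := lt_of_le_of_ne (hδ t).1 (Ne.symm hqt0)
  have hv1 : v < 1 := lt_of_le_of_ne (hδ t).2.1 hqt1
  haveI : Nonempty (Fin L) := ⟨t⟩
  -- positive gap functions
  set f : Fin (n+1) → ℝ := fun j => if z j = v then v else |z j - v| with hf
  set g : Fin L → ℝ := fun s => if δ s = v then v else |δ s - v| with hg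
  set ε : ℝ := min (min v (1 - v))
      (min (Finset.univ.inf' Finset.univ_nonempty f)
           (Finset.univ.inf' Finset.univ_nonempty g)) with hε
  have hfpos : ∀ j, 0 < f j := by
    intro j; simp only [hf]
    split
    · exact hv0
    · next h => exact abs_pos.2 (sub_ne_zero.2 h)
  have hgpos : ∀ s, 0 < g s := by
    intro s; simp only [hg]
    split
    · exact hv0
    · next h => exact abs_pos.2 (sub_ne_zero.2 h)
  have hεpos : 0 < ε := by
    apply lt_min (lt_min hv0 (by linarith))
    apply lt_min
    · exact (Finset.lt_inf'_iff _).2 fun j _ => hfpos j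
    · exact (Finset.lt_inf'_iff _).2 fun s _ => hgpos s
  have hεv : ε ≤ v := le_trans (min_le_left _ _) (min_le_left _ _)
  have hεv1 : ε ≤ 1 - v := le_trans (min_le_left _ _) (min_le_right _ _)
  have hεz : ∀ j, z j ≠ v → ε ≤ |z j - v| := by
    intro j hj
    have : ε ≤ f j := le_trans (le_trans (min_le_right _ _) (min_le_left _ _))
      (Finset.inf'_le _ (Finset.mem_univ j))
    simpa only [hf, if_neg hj] using this
  have hεδ : ∀ s, δ s ≠ v → ε ≤ |δ s - v| := by
    intro s hs
    have : ε ≤ g s := le_trans (le_trans (min_le_right _ _) (min_le_right _ _))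
      (Finset.inf'_le _ (Finset.mem_univ s))
    simpa only [hg, if_neg hs] using this
  -- perturbation
  set c : Fin (n+1) → ℝ := fun j => if z j = v then ε else 0 with hc
  set e : Fin L → ℝ := fun s => if δ s = v then ε else 0 with hedef
  set x : (Fin (n+1) → ℝ) × (Fin L → ℝ) := (fun j => z j - c j, fun s => δ s - e s) with hx
  set y : (Fin (n+1) → ℝ) × (Fin L → ℝ) := (fun j => z j + c j, fun s => δ s + e s) with hy
  have h1v : (1:ℝ) ≠ v := by linarith
  have h0v : (0:ℝ) ≠ v := by linarith
  have hz0v : z 0 ≠ v := by rw [hz0]; exact h1v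
  have habs1 : ε ≤ |(1:ℝ) - v| := by rw [abs_of_pos (by linarith)]; linarith
  have habs0 : ε ≤ |(0:ℝ) - v| := by
    rw [abs_of_neg (by linarith)]; linarith
  -- membership lemma
  have hmem : ∀ w : (Fin (n+1) → ℝ) × (Fin L → ℝ), (w = x ∨ w = y) →
      w ∈ {q : (Fin (n+1) → ℝ) × (Fin L → ℝ) |
        q.1 ∈ {z | z 0 = 1 ∧ Antitone z ∧ 0 ≤ z (Fin.last n)} ∧
        ∀ t : Fin L, 0 ≤ q.2 t ∧ q.2 t ≤ 1 ∧
        q.2 t ≤ q.1 (τ t.succ.castSucc) ∧ q.1 (τ t.succ.castSucc + 1) ≤ q.2 t} := by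
    intro w hw
    have key : ∀ a b : ℝ, a ≤ b → (a ≠ v → ε ≤ |a - v|) → (b ≠ v → ε ≤ |b - v|) →
        a + (if a = v then ε else 0) ≤ b + (if b = v then ε else 0) ∧
        a - (if a = v then ε else 0) ≤ b - (if b = v then ε else 0) :=
      fun a b hab ha hb => pert15 hab (le_of_lt hεpos) ha hb
    have hzero : (0:ℝ) + (if (0:ℝ) = v then ε else 0) = 0 ∧
        (0:ℝ) - (if (0:ℝ) = v then ε else 0) = 0 := by
      rw [if_neg h0v]; norm_num
    have hone : (1:ℝ) + (if (1:ℝ) = v then ε else 0) = 1 ∧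
        (1:ℝ) - (if (1:ℝ) = v then ε else 0) = 1 := by
      rw [if_neg h1v]; norm_num
    rcases hw with rfl | rfl
    all_goals {
      refine ⟨⟨?_, ?_, ?_⟩, ?_⟩
      · -- first coordinate at 0
        simp only [hx, hy, hc, if_neg hz0v, hz0, if_neg h1v]; ring
      · -- Antitone
        rw [Fin.antitone_iff_succ_le]
        intro i
        have hcons : z i.succ ≤ z i.castSucc := hzanti (Fin.castSucc_le_succ i)
        have := key (z i.succ) (z i.castSucc) hcons (hεz _) (hεz _)
        simp only [hx, hy, hc]
        first
          | exact this.2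
          | exact this.1
      · -- nonneg at last
        have := key 0 (z (Fin.last n)) hzn (fun _ => habs0) (hεz _)
        rw [hzero.1] at this
        rw [hzero.2] at this
        simp only [hx, hy, hc]
        first
          | exact this.2
          | exact this.1
      · intro s
        obtain ⟨hs0, hs1, hs2, hs3⟩ := hδ s
        have k0 := key 0 (δ s) hs0 (fun _ => habs0) (hεδ _)
        rw [hzero.1, hzero.2] at k0
        have k1 := key (δ s) 1 hs1 (hεδ _) (fun _ => habs1)
        rw [hone.1, hone.2] at k1
        have k2 := key (δ s) (z (τ s.succ.castSucc)) hs2 (hεδ _) (hεz _)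
        have k3 := key (z (τ s.succ.castSucc + 1)) (δ s) hs3 (hεz _) (hεδ _)
        simp only [hx, hy, hc, hedef]
        first
          | exact ⟨k0.2, k1.2, k2.2, k3.2⟩
          | exact ⟨k0.1, k1.1, k2.1, k3.1⟩
    }
  have hxR := hmem x (Or.inl rfl)
  have hyR := hmem y (Or.inr rfl)
  have hseg : q ∈ openSegment ℝ x y := by
    refine ⟨1/2, 1/2, by norm_num, by norm_num, by norm_num, ?_⟩
    have : ((1:ℝ)/2) • x + ((1:ℝ)/2) • y = q := by
      apply Prod.ext
      · funext j
        simp only [hx, hy, Prod.fst_add, Prod.smul_fst, Pi.add_apply, Pi.smul_apply,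
          smul_eq_mul]
        ring
      · funext s
        simp only [hx, hy, Prod.snd_add, Prod.smul_snd, Pi.add_apply, Pi.smul_apply,
          smul_eq_mul]
        ring
    exact this
  have := (hqext x hxR y hyR hseg).1
  have hxt : x.2 t = v - ε := by
    simp only [hx, hedef, if_pos (rfl : δ t = v)]; rw [if_pos hvdef.symm]
  have : x.2 t = δ t := by rw [this]
  rw [hxt] at this
  simp only [← hvdef] at this
  linarith
end

section
/- Consider φ : [0,2] → R defined by φ(f) = √f for 0 ≤ f ≤ 1 and φ(f) = f for 1 < f ≤ 2, breakpoints (a_0,a_1,a_2) = (0,1,2), Δ = {z : 1 = z_0 ≥ z_1 ≥ z_2 ≥ 0}, and the set R = {(f,φ,z,δ) : φ ≤ ĉ(z), 1 = z_0 ≥ z_1 ≥ δ ≥ z_2 ≥ 0, 0 ≤ δ ≤ 1, f = z_1 + z_2}, where ĉ is the concave envelope over Δ of ψ(z) = φ(z_1 + z_2). Then R has an extreme point with δ = 1/2 ∉ {0,1}; in particular, the point with f = 1/2, φ = 1/√2 (the value ĉ(1, 1/2, 0)), z = (1, 1/2, 0), δ = 1/2 is an extreme point of R. -/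
lemma sqrt_ccv (a b u v : ℝ) (ha : 0 ≤ a) (hb : 0 ≤ b) (hab : a + b = 1)
    (hu : 0 ≤ u) (hv : 0 ≤ v) :
    a * Real.sqrt u + b * Real.sqrt v ≤ Real.sqrt (a * u + b * v) := by
  have h1 := Real.sq_sqrt hu
  have h2 := Real.sq_sqrt hv
  have h3 := Real.sqrt_nonneg u
  have h4 := Real.sqrt_nonneg v
  rw [Real.le_sqrt (by positivity) (by positivity)]
  have e : a*u + b*v - (a*Real.sqrt u + b*Real.sqrt v)^2
      = a*b*(Real.sqrt u - Real.sqrt v)^2 := by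
    linear_combination (-a)*h1 + (-b)*h2 - (a*Real.sqrt u^2 + b*Real.sqrt v^2)*hab
  nlinarith [mul_nonneg (mul_nonneg ha hb) (sq_nonneg (Real.sqrt u - Real.sqrt v))]

lemma sqrt_strict (a b u v : ℝ) (ha : 0 < a) (hb : 0 < b) (hab : a + b = 1)
    (hu : 0 ≤ u) (hv : 0 ≤ v)
    (h : a * Real.sqrt u + b * Real.sqrt v = Real.sqrt (a * u + b * v)) : u = v := by
  have h1 := Real.sq_sqrt hu
  have h2 := Real.sq_sqrt hv
  have h5 : (a * Real.sqrt u + b * Real.sqrt v) ^ 2 = a * u + b * v := by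
    rw [h]; exact Real.sq_sqrt (by positivity)
  have key : a * b * (Real.sqrt u - Real.sqrt v) ^ 2 = 0 := by
    linear_combination a*h1 + b*h2 - h5 + (a*Real.sqrt u^2 + b*Real.sqrt v^2)*hab
  have h6 : (Real.sqrt u - Real.sqrt v) ^ 2 = 0 := by
    rcases mul_eq_zero.mp key with h | h
    · exact absurd h (mul_pos ha hb).ne'
    · exact h
  have h7 : Real.sqrt u = Real.sqrt v := by
    have := pow_eq_zero_iff (n := 2) (by norm_num) |>.mp h6
    linarith [sub_eq_zero.mp this]
  nlinarith

theorem stmt16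
    (φ : ℝ → ℝ) (hφ : ∀ f : ℝ, φ f = if f ≤ 1 then Real.sqrt f else f)
    (Δ : Set (Fin 3 → ℝ))
    (hΔ : Δ = {z | z 0 = 1 ∧ z 1 ≤ z 0 ∧ z 2 ≤ z 1 ∧ 0 ≤ z 2})
    (ψ : (Fin 3 → ℝ) → ℝ) (hψ : ∀ z, ψ z = φ (z 1 + z 2))
    (c : (Fin 3 → ℝ) → ℝ)
    -- c is the concave envelope of ψ over Δ
    (hc1 : ConcaveOn ℝ Δ c) (hc2 : ∀ z ∈ Δ, ψ z ≤ c z)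
    (hc3 : ∀ g : (Fin 3 → ℝ) → ℝ, ConcaveOn ℝ Δ g → (∀ z ∈ Δ, ψ z ≤ g z) →
      ∀ z ∈ Δ, c z ≤ g z)
    (R : Set (ℝ × ℝ × (Fin 3 → ℝ) × ℝ))
    (hR : R = {q | q.2.1 ≤ c q.2.2.1 ∧ q.2.2.1 0 = 1 ∧ q.2.2.1 1 ≤ q.2.2.1 0 ∧
      q.2.2.2 ≤ q.2.2.1 1 ∧ q.2.2.1 2 ≤ q.2.2.2 ∧ 0 ≤ q.2.2.1 2 ∧
      0 ≤ q.2.2.2 ∧ q.2.2.2 ≤ 1 ∧ q.1 = q.2.2.1 1 + q.2.2.1 2}) :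
    (∃ q ∈ Set.extremePoints ℝ R, ¬ (q.2.2.2 = 0 ∨ q.2.2.2 = 1)) ∧
    c ![1, 1/2, 0] = 1 / Real.sqrt 2 ∧
    ((1/2 : ℝ), (1 / Real.sqrt 2 : ℝ), (![1, 1/2, 0] : Fin 3 → ℝ), (1/2 : ℝ)) ∈
      Set.extremePoints ℝ R := by
  have hsqhalf : Real.sqrt (1/2 : ℝ) = 1 / Real.sqrt 2 := by
    rw [show (1/2:ℝ) = 2⁻¹ by norm_num, Real.sqrt_inv]; norm_num
  -- facts about Δ
  have hΔmem : ∀ z ∈ Δ, z 0 = 1 ∧ z 1 ≤ 1 ∧ 0 ≤ z 1 ∧ z 2 ≤ z 1 ∧ 0 ≤ z 2 := by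
    intro z hz
    rw [hΔ] at hz
    obtain ⟨h0, h1, h2, h3⟩ := hz
    exact ⟨h0, h0 ▸ h1, le_trans h3 h2, h2, h3⟩
  have hΔconv : Convex ℝ Δ := by
    rw [hΔ]
    intro x hx y hy a b ha hb hab
    obtain ⟨hx0, hx1, hx2, hx3⟩ := hx
    obtain ⟨hy0, hy1, hy2, hy3⟩ := hy
    refine ⟨?_, ?_, ?_, ?_⟩ <;>
      simp only [Pi.add_apply, Pi.smul_apply, smul_eq_mul, hx0, hy0]
    · linarith
    · nlinarith [mul_le_mul_of_nonneg_left hx1 ha, mul_le_mul_of_nonneg_left hy1 hb]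
    · nlinarith [mul_le_mul_of_nonneg_left hx2 ha, mul_le_mul_of_nonneg_left hy2 hb]
    · nlinarith [mul_nonneg ha hx3, mul_nonneg hb hy3]
  -- the concave majorant g z = √(z 1) + √(z 2)
  set g : (Fin 3 → ℝ) → ℝ := fun z => Real.sqrt (z 1) + Real.sqrt (z 2) with hg
  have hgconc : ConcaveOn ℝ Δ g := by
    refine ⟨hΔconv, ?_⟩
    intro x hx y hy a b ha hb hab
    obtain ⟨_, _, hx1, _, hx2⟩ := hΔmem x hx
    obtain ⟨_, _, hy1, _, hy2⟩ := hΔmem y hy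
    simp only [hg, Pi.add_apply, Pi.smul_apply, smul_eq_mul]
    have t1 := sqrt_ccv a b (x 1) (y 1) ha hb hab hx1 hy1
    have t2 := sqrt_ccv a b (x 2) (y 2) ha hb hab hx2 hy2
    linarith
  have hgmaj : ∀ z ∈ Δ, ψ z ≤ g z := by
    intro z hz
    obtain ⟨h0, h1le, h1nn, h21, h2nn⟩ := hΔmem z hz
    have h2le : z 2 ≤ 1 := le_trans h21 h1le
    have s1 := Real.sq_sqrt h1nn
    have s2 := Real.sq_sqrt h2nn
    have n1 := Real.sqrt_nonneg (z 1)
    have n2 := Real.sqrt_nonneg (z 2)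
    rw [hψ, hφ]
    simp only [hg]
    split_ifs with h
    · rw [← Real.sqrt_sq (by positivity : (0:ℝ) ≤ Real.sqrt (z 1) + Real.sqrt (z 2))]
      apply Real.sqrt_le_sqrt
      nlinarith [mul_nonneg n1 n2]
    · have a1 : z 1 ≤ Real.sqrt (z 1) := (Real.le_sqrt h1nn h1nn).mpr (by nlinarith)
      have a2 : z 2 ≤ Real.sqrt (z 2) := (Real.le_sqrt h2nn h2nn).mpr (by nlinarith)
      linarith
  have hcle : ∀ z ∈ Δ, c z ≤ g z := hc3 g hgconc hgmaj
  -- the special point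
  have hA0 : (![1, 1/2, 0] : Fin 3 → ℝ) 0 = 1 := rfl
  have hA1 : (![1, 1/2, 0] : Fin 3 → ℝ) 1 = 1/2 := rfl
  have hA2 : (![1, 1/2, 0] : Fin 3 → ℝ) 2 = 0 := rfl
  have hAΔ : (![1, 1/2, 0] : Fin 3 → ℝ) ∈ Δ := by
    rw [hΔ]
    refine ⟨hA0, ?_, ?_, ?_⟩
    · rw [hA1, hA0]; norm_num
    · rw [hA2, hA1]; norm_num
    · rw [hA2]
  have hcA : c ![1, 1/2, 0] = 1 / Real.sqrt 2 := by
    have le1 : c ![1, 1/2, 0] ≤ Real.sqrt (1/2) := by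
      have := hcle _ hAΔ
      simp only [hg, hA1, hA2, Real.sqrt_zero, add_zero] at this
      exact this
    have ge1 : Real.sqrt (1/2) ≤ c ![1, 1/2, 0] := by
      have := hc2 _ hAΔ
      rw [hψ, hφ, hA1, hA2, show (1/2:ℝ) + 0 = 1/2 by norm_num,
        if_pos (by norm_num : (1/2:ℝ) ≤ 1)] at this
      exact this
    rw [← hsqhalf]
    exact le_antisymm le1 ge1
  -- the extreme point
  have hext : ((1/2 : ℝ), (1 / Real.sqrt 2 : ℝ), (![1, 1/2, 0] : Fin 3 → ℝ), (1/2 : ℝ)) ∈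
      Set.extremePoints ℝ R := by
    rw [mem_extremePoints]
    constructor
    · rw [hR]
      refine ⟨?_, ?_, ?_, ?_, ?_, ?_, ?_, ?_, ?_⟩ <;> dsimp only
      · exact hcA.ge
      · exact hA0
      · rw [hA1, hA0]; norm_num
      · rw [hA1]
      · rw [hA2]; norm_num
      · rw [hA2]
      · norm_num
      · norm_num
      · rw [hA1, hA2]; norm_num
    · rintro ⟨xf, xp, xz, xd⟩ hx ⟨yf, yp, yz, yd⟩ hy ⟨a, b, ha, hb, hab, hsum⟩
      rw [hR] at hx hy
      simp only [Set.mem_setOf_eq] at hx hy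
      obtain ⟨hxφ, hx0, hx1, hxd1, hxd2, hx2, hxd0, hxdle, hxf⟩ := hx
      obtain ⟨hyφ, hy0, hy1, hyd1, hyd2, hy2, hyd0, hydle, hyf⟩ := hy
      simp only [Prod.ext_iff, Prod.smul_mk, Prod.mk_add_mk, smul_eq_mul, Pi.add_apply,
        Pi.smul_apply, funext_iff] at hsum
      obtain ⟨hs1, hs2, hs3, hs4⟩ := hsum
      have hs30 : a * xz 0 + b * yz 0 = 1 := by
        have := hs3 0; simpa [hA0, Pi.add_apply, Pi.smul_apply, smul_eq_mul] using this
      have hs31 : a * xz 1 + b * yz 1 = 1/2 := by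
        have := hs3 1; simpa [hA1, Pi.add_apply, Pi.smul_apply, smul_eq_mul] using this
      have hs32 : a * xz 2 + b * yz 2 = 0 := by
        have := hs3 2; simpa [hA2, Pi.add_apply, Pi.smul_apply, smul_eq_mul] using this
      -- z2 coordinates vanish
      have hxz2 : xz 2 = 0 := by
        have h : a * xz 2 = a * 0 := by
          rw [mul_zero]
          linarith [mul_nonneg ha.le hx2, mul_nonneg hb.le hy2]
        exact mul_left_cancel₀ ha.ne' h
      have hyz2 : yz 2 = 0 := by
        have h : b * yz 2 = b * 0 := by
          rw [mul_zero]
          linarith [mul_nonneg ha.le hx2, mul_nonneg hb.le hy2]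
        exact mul_left_cancel₀ hb.ne' h
      -- δ = z1 for both
      have l1 : a * xd ≤ a * xz 1 := mul_le_mul_of_nonneg_left hxd1 ha.le
      have l2 : b * yd ≤ b * yz 1 := mul_le_mul_of_nonneg_left hyd1 hb.le
      have e1 : a * xd = a * xz 1 := by linarith
      have e2 : b * yd = b * yz 1 := by linarith
      have hxdeq : xd = xz 1 := mul_left_cancel₀ ha.ne' e1
      have hydeq : yd = yz 1 := mul_left_cancel₀ hb.ne' e2
      -- z1 bounds
      have hxz1nn : 0 ≤ xz 1 := le_trans (le_trans hx2 hxd2) hxd1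
      have hyz1nn : 0 ≤ yz 1 := le_trans (le_trans hy2 hyd2) hyd1
      -- membership in Δ
      have hxΔ : xz ∈ Δ := by rw [hΔ]; exact ⟨hx0, hx1, le_trans hxd2 hxd1, hx2⟩
      have hyΔ : yz ∈ Δ := by rw [hΔ]; exact ⟨hy0, hy1, le_trans hyd2 hyd1, hy2⟩
      -- φ coordinate bounds
      have hxφb : xp ≤ Real.sqrt (xz 1) := by
        have h := hcle _ hxΔ
        simp only [hg, hxz2, Real.sqrt_zero, add_zero] at h
        linarith
      have hyφb : yp ≤ Real.sqrt (yz 1) := by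
        have h := hcle _ hyΔ
        simp only [hg, hyz2, Real.sqrt_zero, add_zero] at h
        linarith
      -- concavity chain
      have hcc : a * Real.sqrt (xz 1) + b * Real.sqrt (yz 1) ≤ Real.sqrt (1/2) := by
        have := sqrt_ccv a b (xz 1) (yz 1) ha.le hb.le hab hxz1nn hyz1nn
        rwa [hs31] at this
      have m1 : a * xp ≤ a * Real.sqrt (xz 1) := mul_le_mul_of_nonneg_left hxφb ha.le
      have m2 : b * yp ≤ b * Real.sqrt (yz 1) := mul_le_mul_of_nonneg_left hyφb hb.le
      have hs2' : a * xp + b * yp = Real.sqrt (1/2) := by rw [hsqhalf]; exact hs2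
      have heqcc : a * Real.sqrt (xz 1) + b * Real.sqrt (yz 1) = Real.sqrt (1/2) := by
        linarith
      -- strict concavity forces z1 equal
      have hz1eq : xz 1 = yz 1 := by
        apply sqrt_strict a b (xz 1) (yz 1) ha hb hab hxz1nn hyz1nn
        rw [hs31]; exact heqcc
      have hxz1 : xz 1 = 1/2 := by linear_combination hs31 - (xz 1) * hab + b * hz1eq
      have hyz1 : yz 1 = 1/2 := hz1eq ▸ hxz1
      -- φ coordinates
      have exp : a * xp = a * Real.sqrt (xz 1) := by linarith
      have eyp : b * yp = b * Real.sqrt (yz 1) := by linarith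
      have hxp : xp = 1 / Real.sqrt 2 := by
        have := mul_left_cancel₀ ha.ne' exp
        rw [this, hxz1, hsqhalf]
      have hyp : yp = 1 / Real.sqrt 2 := by
        have := mul_left_cancel₀ hb.ne' eyp
        rw [this, hyz1, hsqhalf]
      -- z0 coordinates and f coordinates
      have hxfv : xf = 1/2 := by rw [hxf, hxz1, hxz2]; norm_num
      have hyfv : yf = 1/2 := by rw [hyf, hyz1, hyz2]; norm_num
      have hxzeq : xz = ![1, 1/2, 0] := by
        funext i
        fin_cases i
        · exact hx0.trans hA0.symm
        · exact hxz1.trans hA1.symm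
        · exact hxz2.trans hA2.symm
      have hyzeq : yz = ![1, 1/2, 0] := by
        funext i
        fin_cases i
        · exact hy0.trans hA0.symm
        · exact hyz1.trans hA1.symm
        · exact hyz2.trans hA2.symm
      constructor
      · simp only [Prod.mk.injEq]
        exact ⟨hxfv, hxp, hxzeq, by rw [hxdeq, hxz1]⟩
      · simp only [Prod.mk.injEq]
        exact ⟨hyfv, hyp, hyzeq, by rw [hydeq, hyz1]⟩
  refine ⟨⟨_, hext, ?_⟩, hcA, hext⟩
  norm_num
end

section
/- Let f_1, f_2 : X → R with f_i^L ≤ f_i(x) ≤ f_i^U, and suppose u_i : X → R satisfies u_i(x) ≤ min{f_i(x), a_i} for constants a_i ∈ [f_i^L, f_i^U] (i = 1,2). Then for all x ∈ X: f_1(x) f_2(x) ≥ (f_2^U − a_2) u_1(x) + (f_1^U − a_1) u_2(x) + a_2 f_1(x) + a_1 f_2(x) + a_1 a_2 − a_1 f_2^U − f_1^U a_2. -/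
/-!
Shifting by `aᵢ`, the claim becomes `(f₁ - a₁)(f₂ - a₂) ≥ (f₂ᵁ - a₂)(u₁ - a₁) + (f₁ᵁ - a₁)(u₂ - a₂)`.
Here `uᵢ - aᵢ ≤ min (fᵢ - aᵢ) 0` and `fᵢᵁ - aᵢ ≥ max (fᵢ - aᵢ) 0`, and for `p ≤ P`, `q ≤ Q` with
`P, Q ≥ 0` one has `min p 0 * Q + min q 0 * P ≤ p * q` by a sign case split on `p` and `q`.
-/

theorem min_zero_mul_add_min_zero_mul_le_mul {α : Type*} [CommRing α] [LinearOrder α]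
    [IsStrictOrderedRing α] {p q P Q : α} (hp : p ≤ P) (hq : q ≤ Q) (hP : 0 ≤ P) (hQ : 0 ≤ Q) :
    min p 0 * Q + min q 0 * P ≤ p * q := by
  rcases le_total 0 p with hp0 | hp0 <;> rcases le_total 0 q with hq0 | hq0
  · simp only [min_eq_right hp0, min_eq_right hq0, zero_mul, add_zero]
    exact mul_nonneg hp0 hq0
  · simp only [min_eq_right hp0, min_eq_left hq0, zero_mul, zero_add]
    calc q * P ≤ q * p := mul_le_mul_of_nonpos_left hp hq0
      _ = p * q := mul_comm q p
  · simp only [min_eq_left hp0, min_eq_right hq0, zero_mul, add_zero]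
    exact mul_le_mul_of_nonpos_left hq hp0
  · simp only [min_eq_left hp0, min_eq_left hq0]
    have hpQ : p * Q ≤ 0 := mul_nonpos_of_nonpos_of_nonneg hp0 hQ
    have hqP : q * P ≤ 0 := mul_nonpos_of_nonpos_of_nonneg hq0 hP
    have hpq : 0 ≤ p * q := mul_nonneg_of_nonpos_of_nonpos hp0 hq0
    linarith

theorem sub_le_min_sub_zero_of_le_min {α : Type*} [AddGroup α] [LinearOrder α]
    [AddRightMono α] {u f a : α} (hu : u ≤ min f a) : u - a ≤ min (f - a) 0 :=
  le_min (sub_le_sub_right (hu.trans (min_le_left f a)) a)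
    (sub_nonpos.mpr (hu.trans (min_le_right f a)))

theorem composite_mul_underestimator_le {α : Type*} [CommRing α] [LinearOrder α]
    [IsStrictOrderedRing α] {f₁ f₂ u₁ u₂ f₁U f₂U a₁ a₂ : α}
    (hf₁ : f₁ ≤ f₁U) (hf₂ : f₂ ≤ f₂U) (ha₁ : a₁ ≤ f₁U) (ha₂ : a₂ ≤ f₂U)
    (hu₁ : u₁ ≤ min f₁ a₁) (hu₂ : u₂ ≤ min f₂ a₂) :
    (f₂U - a₂) * u₁ + (f₁U - a₁) * u₂ + a₂ * f₁ + a₁ * f₂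
      + a₁ * a₂ - a₁ * f₂U - f₁U * a₂ ≤ f₁ * f₂ := by
  have hP : 0 ≤ f₁U - a₁ := sub_nonneg.mpr ha₁
  have hQ : 0 ≤ f₂U - a₂ := sub_nonneg.mpr ha₂
  have key : (f₂U - a₂) * (u₁ - a₁) + (f₁U - a₁) * (u₂ - a₂) ≤ (f₁ - a₁) * (f₂ - a₂) :=
    calc (f₂U - a₂) * (u₁ - a₁) + (f₁U - a₁) * (u₂ - a₂)
        ≤ min (f₁ - a₁) 0 * (f₂U - a₂) + min (f₂ - a₂) 0 * (f₁U - a₁) := by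
          rw [mul_comm _ (u₁ - a₁), mul_comm _ (u₂ - a₂)]
          gcongr
          · exact sub_le_min_sub_zero_of_le_min hu₁
          · exact sub_le_min_sub_zero_of_le_min hu₂
      _ ≤ (f₁ - a₁) * (f₂ - a₂) :=
          min_zero_mul_add_min_zero_mul_le_mul (sub_le_sub_right hf₁ a₁)
            (sub_le_sub_right hf₂ a₂) hP hQ
  linear_combination key

theorem stmt17 {X : Type*} (f₁ f₂ u₁ u₂ : X → ℝ)
    (f₁L f₁U f₂L f₂U a₁ a₂ : ℝ)
    (hb₁ : ∀ x, f₁L ≤ f₁ x ∧ f₁ x ≤ f₁U) (hb₂ : ∀ x, f₂L ≤ f₂ x ∧ f₂ x ≤ f₂U)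
    (ha₁ : f₁L ≤ a₁ ∧ a₁ ≤ f₁U) (ha₂ : f₂L ≤ a₂ ∧ a₂ ≤ f₂U)
    (hu₁ : ∀ x, u₁ x ≤ min (f₁ x) a₁) (hu₂ : ∀ x, u₂ x ≤ min (f₂ x) a₂) :
    ∀ x : X,
      (f₂U - a₂) * u₁ x + (f₁U - a₁) * u₂ x + a₂ * f₁ x + a₁ * f₂ x
        + a₁ * a₂ - a₁ * f₂U - f₁U * a₂ ≤ f₁ x * f₂ x := fun x =>
  composite_mul_underestimator_le (hb₁ x).2 (hb₂ x).2 ha₁.2 ha₂.2 (hu₁ x) (hu₂ x)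
end

section
/- Under the same setup (u_i(x) ≤ min{f_i(x), a_i} ≤ a_i, f_i^L ≤ f_i(x) ≤ f_i^U for i = 1,2), the following overestimating inequality holds for all x ∈ X: f_1(x) f_2(x) ≤ (f_2^L − a_2) u_1(x) + (a_1 − f_1^U) u_2(x) + a_2 f_1(x) + f_1^U f_2(x) − a_1 f_2^L. -/
/-!
The coefficients `f₂ᴸ - a₂` and `a₁ - f₁ᵁ` of the underestimators are nonpositive, so the
right-hand side only decreases when `uᵢ` is raised to `min fᵢ aᵢ`; it therefore suffices to prove
the bound for `uᵢ = min fᵢ aᵢ`. There the gap to `f₁ f₂` is a product of nonnegative factors: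
`(f₁ᵁ - f₁)(f₂ - a₂) + (a₂ - f₂ᴸ)(a₁ - min f₁ a₁)` if `a₂ ≤ f₂`, `(a₁ - f₁)(f₂ - f₂ᴸ)` if
`f₂ ≤ a₂` and `f₁ ≤ a₁`, and `(f₁ - a₁)(a₂ - f₂)` if `f₂ ≤ a₂` and `a₁ ≤ f₁`.
-/

/-- The right-hand side of inequality `r₂`, with `v₁, v₂` in place of the underestimators. -/
def r₂Overestimator (x₁U x₂L a₁ a₂ x₁ x₂ v₁ v₂ : ℝ) : ℝ :=
  (x₂L - a₂) * v₁ + (a₁ - x₁U) * v₂ + a₂ * x₁ + x₁U * x₂ - a₁ * x₂L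

section

variable {x₁U x₂L a₁ a₂ x₁ x₂ : ℝ}

lemma r₂Overestimator_le_of_le {v₁ v₂ w₁ w₂ : ℝ} (ha₁ : a₁ ≤ x₁U) (ha₂ : x₂L ≤ a₂)
    (hv₁ : v₁ ≤ w₁) (hv₂ : v₂ ≤ w₂) :
    r₂Overestimator x₁U x₂L a₁ a₂ x₁ x₂ w₁ w₂ ≤ r₂Overestimator x₁U x₂L a₁ a₂ x₁ x₂ v₁ v₂ := by
  have h₁ := mul_le_mul_of_nonpos_left hv₁ (sub_nonpos.2 ha₂)
  have h₂ := mul_le_mul_of_nonpos_left hv₂ (sub_nonpos.2 ha₁)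
  unfold r₂Overestimator
  linarith

lemma mul_le_r₂Overestimator_min (h₁ : x₁ ≤ x₁U) (h₂ : x₂L ≤ x₂) (ha₂ : x₂L ≤ a₂) :
    x₁ * x₂ ≤ r₂Overestimator x₁U x₂L a₁ a₂ x₁ x₂ (min x₁ a₁) (min x₂ a₂) := by
  unfold r₂Overestimator
  rcases le_total a₂ x₂ with hx₂ | hx₂
  · rw [min_eq_right hx₂]
    linarith [mul_nonneg (sub_nonneg.2 h₁) (sub_nonneg.2 hx₂),
      mul_nonneg (sub_nonneg.2 ha₂) (sub_nonneg.2 (min_le_right x₁ a₁))]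
  · rw [min_eq_left hx₂]
    rcases le_total x₁ a₁ with hx₁ | hx₁
    · rw [min_eq_left hx₁]
      linarith [mul_nonneg (sub_nonneg.2 hx₁) (sub_nonneg.2 h₂)]
    · rw [min_eq_right hx₁]
      linarith [mul_nonneg (sub_nonneg.2 hx₁) (sub_nonneg.2 hx₂)]

end

theorem stmt18 {X : Type*} (f₁ f₂ u₁ u₂ : X → ℝ)
    (f₁L f₁U f₂L f₂U a₁ a₂ : ℝ)
    (hb₁ : ∀ x, f₁L ≤ f₁ x ∧ f₁ x ≤ f₁U) (hb₂ : ∀ x, f₂L ≤ f₂ x ∧ f₂ x ≤ f₂U)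
    (ha₁ : f₁L ≤ a₁ ∧ a₁ ≤ f₁U) (ha₂ : f₂L ≤ a₂ ∧ a₂ ≤ f₂U)
    (hu₁ : ∀ x, u₁ x ≤ min (f₁ x) a₁) (hu₂ : ∀ x, u₂ x ≤ min (f₂ x) a₂) :
    ∀ x : X,
      f₁ x * f₂ x ≤
        (f₂L - a₂) * u₁ x + (a₁ - f₁U) * u₂ x + a₂ * f₁ x + f₁U * f₂ x - a₁ * f₂L := fun x =>
  (mul_le_r₂Overestimator_min (hb₁ x).2 (hb₂ x).1 ha₂.1).trans
    (r₂Overestimator_le_of_le ha₁.2 ha₂.1 (hu₁ x) (hu₂ x))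
end

section
/- Let Λ = {λ ∈ R^{n+1} : λ ≥ 0, Σ_{j=0}^n λ_j = 1} and define the SOS2 region S = ∪_{j=1}^n {λ ∈ Λ : λ_k = 0 for all k ∉ {j−1, j}}. Let {η^{(1)},…,η^{(n)}} ⊆ {0,1}^{⌈log₂ n⌉} be distinct binary vectors such that consecutive vectors η^{(t)}, η^{(t+1)} differ in at most one component (a Gray code), set η^{(0)} = η^{(1)}, η^{(n+1)} = η^{(n)}, and for each k define L_k = {j : η^{(j)}_k = 1 or η^{(j+1)}_k = 1} and R_k = {j : η^{(j)}_k = 0 or η^{(j+1)}_k = 0}. Then λ ∈ S if and only if there exists δ ∈ {0,1}^{⌈log₂ n⌉} with Σ_{j∉L_k} λ_j ≤ δ_k ≤ 1 − Σ_{j∉R_k} λ_j for all k. -/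
open Finset

/-!
Membership of `λ` in the SOS2 region says that the support of `λ` lies in some `{j - 1, j}`.
For `δ ∈ {0,1}`, the `k`-th pair of constraints just says that every index in the support of
`λ` has a neighbouring code `η^{(j)}` or `η^{(j+1)}` whose `k`-th bit is the bit `b_k` selected
by `δ_k`. Since neighbouring codes differ in at most one bit, `b` must then equal one of the two
neighbouring codes of each support index, and distinctness of the codes pins all of these
indices down to one pair `{t - 1, t}`.
-/

lemma sum_filter_nonpos_iff {ι : Type*} [Fintype ι] {l : ι → ℝ} (hl : ∀ i, 0 ≤ l i)
    (p : ι → Prop) [DecidablePred p] :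
    ∑ i ∈ univ.filter p, l i ≤ 0 ↔ ∀ i, l i ≠ 0 → ¬p i := by
  rw [LE.le.ge_iff_eq' (sum_nonneg fun i _ => hl i), sum_eq_zero_iff_of_nonneg fun i _ => hl i]
  simp only [mem_filter, mem_univ, true_and]
  exact forall_congr' fun i => not_imp_not.symm

lemma sum_filter_le_one {ι : Type*} [Fintype ι] {l : ι → ℝ} (hl : ∀ i, 0 ≤ l i)
    (hsum : ∑ i, l i = 1) (p : ι → Prop) [DecidablePred p] :
    ∑ i ∈ univ.filter p, l i ≤ 1 :=
  hsum ▸ sum_le_sum_of_subset_of_nonneg (subset_univ _) fun i _ _ => hl i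

/-- The value `δ = 0` selects the bit `true`, and `δ = 1` the bit `false`. -/
lemma exists_binary_between_iff {ι : Type*} [Fintype ι] {l : ι → ℝ} (hl : ∀ i, 0 ≤ l i)
    (hsum : ∑ i, l i = 1) (a b : ι → Bool) :
    (∃ d : ℝ, (d = 0 ∨ d = 1) ∧
        ∑ i ∈ univ.filter (fun i => ¬(a i = true ∨ b i = true)), l i ≤ d ∧
        d ≤ 1 - ∑ i ∈ univ.filter (fun i => ¬(a i = false ∨ b i = false)), l i) ↔
      ∃ c : Bool, ∀ i, l i ≠ 0 → a i = c ∨ b i = c := by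
  constructor
  · rintro ⟨d, rfl | rfl, hlo, hhi⟩
    · exact ⟨true, fun i hi => not_not.mp ((sum_filter_nonpos_iff hl _).mp hlo i hi)⟩
    · exact ⟨false, fun i hi => not_not.mp ((sum_filter_nonpos_iff hl _).mp (by linarith) i hi)⟩
  · rintro ⟨(_ | _), hc⟩
    · have := (sum_filter_nonpos_iff hl _).mpr fun i hi => not_not.mpr (hc i hi)
      exact ⟨1, Or.inr rfl, sum_filter_le_one hl hsum _, by linarith⟩
    · have := (sum_filter_nonpos_iff hl _).mpr fun i hi => not_not.mpr (hc i hi)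
      have hle := sum_filter_le_one hl hsum fun i => ¬(a i = false ∨ b i = false)
      exact ⟨0, Or.inl rfl, this, by linarith⟩

lemma eq_or_eq_of_card_filter_ne_le_one {α β : Type*} [Fintype α] [DecidableEq β]
    {u v w : α → β} (huv : (univ.filter fun k => u k ≠ v k).card ≤ 1)
    (hw : ∀ k, u k = w k ∨ v k = w k) : w = u ∨ w = v := by
  refine or_iff_not_imp_left.mpr fun hwu => funext fun k => ?_
  obtain ⟨k₀, hk₀⟩ := Function.ne_iff.mp hwu
  have hvk₀ : v k₀ = w k₀ := (hw k₀).resolve_left (Ne.symm hk₀)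
  rcases hw k with hu | hv
  · by_cases huvk : u k = v k
    · rw [← hu, huvk]
    · have : k = k₀ := card_le_one.mp huv k (by simpa using huvk) k₀
        (by simpa [hvk₀] using hk₀.symm)
      exact this ▸ hvk₀.symm
  · exact hv.symm

section GrayCode

variable {n m : ℕ} {η : ℕ → Fin m → Bool}

lemma card_filter_ne_succ_le_one
    (hgray : ∀ t : ℕ, 1 ≤ t → t < n →
      (univ.filter fun k => η t k ≠ η (t+1) k).card ≤ 1)
    (h0 : η 0 = η 1) (hend : η (n+1) = η n) {s : ℕ} (hs : s ≤ n) :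
    (univ.filter fun k => η s k ≠ η (s+1) k).card ≤ 1 := by
  rcases Nat.eq_zero_or_pos s with rfl | hs₀
  · simp [h0]
  rcases hs.eq_or_lt with rfl | hsn
  · simp [hend]
  · exact hgray s hs₀ hsn

/-- Clamping `s` to `[1, n]` turns the padded codes `η^{(0)}, …, η^{(n+1)}` into the distinct
codes `η^{(1)}, …, η^{(n)}`, so `b` is the code of a single clamped index `t`, and every point of
the support of `l` is `t - 1` or `t`. -/
lemma exists_support_subset_pair (hn : 0 < n)
    (hdist : ∀ s t : ℕ, 1 ≤ s → s ≤ n → 1 ≤ t → t ≤ n → η s = η t → s = t)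
    (h0 : η 0 = η 1) (hend : η (n+1) = η n) {l : Fin (n+1) → ℝ} {b : Fin m → Bool}
    (hb : ∀ i : Fin (n+1), l i ≠ 0 → b = η i ∨ b = η (i+1)) {i₀ : Fin (n+1)} (hi₀ : l i₀ ≠ 0) :
    ∃ j : Fin n, ∀ i, l i ≠ 0 → i = j.castSucc ∨ i = j.succ := by
  have hc : ∀ s ≤ n + 1, η s = η (min (max s 1) n) := by
    intro s hs
    rcases Nat.eq_zero_or_pos s with rfl | hs₀
    · rwa [show min (max 0 1) n = 1 by omega]
    rcases hs.eq_or_lt with rfl | hsn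
    · rwa [show min (max (n + 1) 1) n = n by omega]
    · congr; omega
  have hc_eq : ∀ s ≤ n + 1, b = η s → ∀ s' ≤ n + 1, b = η s' →
      min (max s 1) n = min (max s' 1) n :=
    fun s hs hbs s' hs' hbs' => hdist _ _ (by omega) (by omega) (by omega) (by omega)
      (by rw [← hc s hs, ← hc s' hs', ← hbs, ← hbs'])
  obtain ⟨s₀, hs₀, hb₀⟩ : ∃ s₀ ≤ n + 1, b = η s₀ := by
    rcases hb i₀ hi₀ with h | h
    exacts [⟨i₀, by omega, h⟩, ⟨i₀ + 1, by omega, h⟩]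
  refine ⟨⟨min (max s₀ 1) n - 1, by omega⟩, fun i hi => ?_⟩
  simp only [Fin.ext_iff, Fin.val_castSucc, Fin.val_succ]
  rcases hb i hi with h | h
  · have := hc_eq _ (by omega) h _ hs₀ hb₀; omega
  · have := hc_eq _ (by omega) h _ hs₀ hb₀; omega

end GrayCode

theorem stmt19 {n : ℕ} (hn : 0 < n)
    (Λ : Set (Fin (n+1) → ℝ))
    (hΛ : Λ = {l | (∀ j, 0 ≤ l j) ∧ ∑ j, l j = 1})
    (S : Set (Fin (n+1) → ℝ))
    (hS : S = ⋃ j : Fin n,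
      {l ∈ Λ | ∀ k : Fin (n+1), k ≠ j.castSucc → k ≠ j.succ → l k = 0})
    (η : ℕ → Fin (Nat.clog 2 n) → Bool)
    -- η^{(1)},…,η^{(n)} are distinct
    (hdist : ∀ s t : ℕ, 1 ≤ s → s ≤ n → 1 ≤ t → t ≤ n → η s = η t → s = t)
    -- consecutive vectors differ in at most one component (Gray code)
    (hgray : ∀ t : ℕ, 1 ≤ t → t < n →
      (Finset.univ.filter fun k => η t k ≠ η (t+1) k).card ≤ 1)
    (h0 : η 0 = η 1) (hend : η (n+1) = η n)
    (lam : Fin (n+1) → ℝ) (hlam : lam ∈ Λ) :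
    lam ∈ S ↔ ∃ δ : Fin (Nat.clog 2 n) → ℝ, ∀ k,
      (δ k = 0 ∨ δ k = 1) ∧
      (∑ j ∈ Finset.univ.filter
          (fun j : Fin (n+1) => ¬(η (j : ℕ) k = true ∨ η ((j : ℕ) + 1) k = true)),
        lam j) ≤ δ k ∧
      δ k ≤ 1 - ∑ j ∈ Finset.univ.filter
          (fun j : Fin (n+1) => ¬(η (j : ℕ) k = false ∨ η ((j : ℕ) + 1) k = false)),
        lam j := by
  subst hΛ hS
  obtain ⟨hnn, hsum⟩ := hlam
  rw [Classical.skolem.symm.trans <| (forall_congr' fun k => exists_binary_between_iff hnn hsum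
    (fun i => η i k) (fun i => η (i + 1) k)).trans Classical.skolem]
  simp only [Set.mem_iUnion, Set.mem_ofPred_eq]
  constructor
  · rintro ⟨j, -, hj⟩
    refine ⟨η (j + 1), fun k i hi => ?_⟩
    by_cases hij : i = j.castSucc
    · simp [hij]
    · simp [not_imp_comm.mp (hj i hij) hi]
  · rintro ⟨b, hb⟩
    obtain ⟨i₀, -, hi₀⟩ := exists_ne_zero_of_sum_ne_zero (by simp [hsum] : ∑ i, lam i ≠ 0)
    obtain ⟨j, hj⟩ := exists_support_subset_pair hn hdist h0 hend
      (fun i hi => eq_or_eq_of_card_filter_ne_le_one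
        (card_filter_ne_succ_le_one hgray h0 hend (Nat.lt_succ_iff.mp i.isLt))
        fun k => hb k i hi) hi₀
    exact ⟨j, ⟨hnn, hsum⟩, fun i h₁ h₂ => by_contra fun hi => (hj i hi).elim h₁ h₂⟩
end
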